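/- arXiv:2603.07501 — 7 statements merged into one kernel-verified Lean document; each statement's English description precedes it below -/
import Mathlib

section
/- Let k be an even integer and t an odd integer with 0 < t < k. Let H = (V,E) be a k-uniform hypergraph with n vertices, m ≥ 1 edges, and minimum degree δ, and let λ be the least element of the set {k·∑_{e∈E} ∏_{i∈e} x_i : x ∈ ℝ^V, ∑_{i∈V} x_i^k = 1} (the minimum H-eigenvalue of the adjacency tensor of H). Then the t-independence number satisfies α_t(H) ≤ t(km − nλ)·(−λ)^{t/(k−t)} / ( (k−t)·δ^{k/(k−t)} + (kδ − tλ)·(−λ)^{t/(k−t)} ). -/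
/-!
Since `∑ i, x i ^ k` and `∑_e ∏_{i ∈ e} x i` are both homogeneous of degree `k`, the minimality
of `λ` gives `λ ∑ i, x i ^ k ≤ k ∑_e ∏_{i ∈ e} x i` for every `x`. Test this on the vector equal
to `-r` on a maximum `t`-independent set `S` and to `1` elsewhere: as `t` is odd and `k` even, an
edge meeting `S` contributes `-r ^ t` and every other edge `1`. Together with the double count
`δ |S| ≤ t · #{edges meeting S}` this bounds `|S|` for every `r ≥ 0`; the choice
`δ = -λ r ^ (k - t)` yields the stated bound.
-/

open Finset

section

variable {V : Type*} {E : Finset (Finset V)}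

def edgeProductSum {R : Type*} [CommSemiring R] (E : Finset (Finset V)) (x : V → R) : R :=
  ∑ e ∈ E, ∏ i ∈ e, x i

lemma edgeProductSum_smul {R : Type*} [CommSemiring R] {k : ℕ} (huniform : ∀ e ∈ E, #e = k)
    (c : R) (x : V → R) : edgeProductSum E (c • x) = c ^ k * edgeProductSum E x := by
  simp only [edgeProductSum, mul_sum, Pi.smul_apply, smul_eq_mul, ← pow_card_mul_prod]
  exact sum_congr rfl fun e he => by rw [huniform e he]

def IsTIndependent [DecidableEq V] (E : Finset (Finset V)) (t : ℕ) (S : Finset V) : Prop :=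
  ∀ e ∈ E, #(e ∩ S) = 0 ∨ #(e ∩ S) = t

namespace IsTIndependent

variable [DecidableEq V] {t : ℕ} {S : Finset V}

lemma sum_comp_card_inter {M : Type*} [AddCommMonoid M] (hS : IsTIndependent E t S)
    (g : ℕ → M) :
    ∑ e ∈ E, g #(e ∩ S) = #{e ∈ E | #(e ∩ S) = t} • g t + #{e ∈ E | #(e ∩ S) ≠ t} • g 0 := by
  rw [← sum_filter_add_sum_filter_not E fun e => #(e ∩ S) = t, ← sum_const, ← sum_const]
  congr 1 <;> refine sum_congr rfl fun e he => ?_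
  · rw [(mem_filter.1 he).2]
  · obtain ⟨heE, hne⟩ := mem_filter.1 he
    rw [(hS e heE).resolve_right hne]

lemma card_mul_le {δ : ℕ} (hS : IsTIndependent E t S) (hδ : ∀ i, δ ≤ #{e ∈ E | i ∈ e}) :
    #S * δ ≤ t * #{e ∈ E | #(e ∩ S) = t} :=
  calc #S * δ ≤ ∑ e ∈ E, #(S ∩ e) := le_sum_card_inter fun i _ => hδ i
    _ = t * #{e ∈ E | #(e ∩ S) = t} := by
      simp_rw [inter_comm S]
      simpa [mul_comm] using hS.sum_comp_card_inter id

lemma edgeProductSum_ite {R : Type*} [CommRing R] (hS : IsTIndependent E t S) (a : R) :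
    edgeProductSum E (fun i => if i ∈ S then a else 1) =
      #{e ∈ E | #(e ∩ S) = t} * a ^ t + (#E - #{e ∈ E | #(e ∩ S) = t}) := by
  rw [edgeProductSum]
  simp only [prod_ite_mem, prod_const]
  rw [hS.sum_comp_card_inter, ← card_filter_add_card_filter_not (s := E) fun e => #(e ∩ S) = t]
  push_cast
  ring

end IsTIndependent

variable [Fintype V] {k : ℕ} {lam : ℝ}

lemma mul_sum_pow_le_of_mem_lowerBounds (hk : Even k) (hk0 : k ≠ 0)
    (huniform : ∀ e ∈ E, #e = k)
    (hlam : lam ∈ lowerBounds {y : ℝ | ∃ x : V → ℝ, ∑ i, x i ^ k = 1 ∧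
      y = k * edgeProductSum E x}) (x : V → ℝ) :
    lam * ∑ i, x i ^ k ≤ k * edgeProductSum E x := by
  obtain hs | hs := (sum_nonneg fun i _ => hk.pow_nonneg (x i)).eq_or_lt
  · have hx : x = (0 : ℝ) • x := by
      ext i
      simpa [hk0] using
        (sum_eq_zero_iff_of_nonneg fun i _ => hk.pow_nonneg (x i)).1 hs.symm i (mem_univ i)
    rw [← hs, hx, edgeProductSum_smul huniform, zero_pow hk0]
    simp
  · set c : ℝ := (∑ i, x i ^ k)⁻¹ ^ (k⁻¹ : ℝ)
    have hc : c ^ k = (∑ i, x i ^ k)⁻¹ := Real.rpow_inv_natCast_pow (inv_nonneg.2 hs.le) hk0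
    have hnorm : ∑ i, (c • x) i ^ k = 1 := by
      simp only [Pi.smul_apply, smul_eq_mul, mul_pow, ← mul_sum, hc, inv_mul_cancel₀ hs.ne']
    have hlow := hlam ⟨c • x, hnorm, rfl⟩
    rw [edgeProductSum_smul huniform, hc] at hlow
    rw [← le_div_iff₀ hs]
    exact hlow.trans_eq (by ring)

lemma le_neg_one_of_forall_mul_sum_pow_le [DecidableEq V] (hk : Even k) (hk0 : k ≠ 0)
    (huniform : ∀ e ∈ E, #e = k) {e : Finset V} (he : e ∈ E)
    (hray : ∀ x : V → ℝ, lam * ∑ i, x i ^ k ≤ k * edgeProductSum E x) : lam ≤ -1 := by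
  obtain ⟨v, hv⟩ : e.Nonempty := card_pos.1 ((huniform e he).symm ▸ Nat.pos_of_ne_zero hk0)
  set x : V → ℝ := fun i => if i = v then -1 else if i ∈ e then 1 else 0
  have hnorm : ∑ i, x i ^ k = k := by
    have hpow : ∀ i, x i ^ k = if i ∈ e then 1 else 0 := by
      intro i
      by_cases hiv : i = v
      · simp [x, hiv, hv, hk.neg_one_pow]
      · by_cases hie : i ∈ e <;> simp [x, hiv, hie, hk0]
    simp [hpow, huniform e he]
  have hform : edgeProductSum E x = -1 := by
    rw [edgeProductSum, sum_eq_single_of_mem e he]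
    · rw [← mul_prod_erase e x hv, prod_eq_one fun i hi => ?_]
      · simp [x]
      · simp [x, ne_of_mem_erase hi, mem_of_mem_erase hi]
    · intro e' he' hne
      obtain ⟨i, hie', hie⟩ := not_subset.1 fun hsub =>
        hne (eq_of_subset_of_card_le hsub (by rw [huniform e he, huniform e' he']))
      refine prod_eq_zero hie' ?_
      simp [x, hie, show i ≠ v from fun h => hie (h ▸ hv)]
  have hk0' : (0 : ℝ) < k := by exact_mod_cast Nat.pos_of_ne_zero hk0
  have hx := hray x
  rw [hnorm, hform] at hx
  nlinarith

lemma sum_ite_mem_pow {R : Type*} [CommRing R] [DecidableEq V] (S : Finset V) (a : R) :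
    ∑ i, (if i ∈ S then a else 1) ^ k = #S * a ^ k + (Fintype.card V - #S) := by
  simp [ite_pow, sum_ite, filter_notMem_eq_sdiff, card_sdiff, Nat.cast_sub (card_le_univ S)]

end

lemma hoffman_denominator_eq {k t : ℕ} (htk : t < k) {lam d r : ℝ} (hlam : lam < 0)
    (hr : 0 ≤ r) (hd : d = -lam * r ^ (k - t)) :
    (k - t) * d ^ ((k : ℝ) / (k - t)) + (k * d - t * lam) * (-lam) ^ ((t : ℝ) / (k - t)) =
      (k * d * (1 + r ^ t) + t * lam * (r ^ k - 1)) * (-lam) ^ ((t : ℝ) / (k - t)) := by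
  have hkt : ((k - t : ℕ) : ℝ) = k - t := Nat.cast_sub htk.le
  have hkt0 : (k : ℝ) - t ≠ 0 := by
    rw [← hkt]
    exact_mod_cast (Nat.sub_pos_of_lt htk).ne'
  have hpow : d ^ ((k : ℝ) / (k - t)) = -lam * (-lam) ^ ((t : ℝ) / (k - t)) * r ^ k := by
    have hexp : (k : ℝ) / (k - t) = 1 + t / (k - t) := by
      field_simp
      ring
    rw [hd, Real.mul_rpow (by linarith) (by positivity), ← Real.rpow_natCast r,
      ← Real.rpow_mul hr, hkt, mul_div_cancel₀ _ hkt0, Real.rpow_natCast, hexp,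
      Real.rpow_add (by linarith), Real.rpow_one]
  have hdr : d * r ^ t = -lam * r ^ k := by
    rw [hd, mul_assoc, ← pow_add, Nat.sub_add_cancel htk.le]
  linear_combination ((k : ℝ) - t) * hpow - k * (-lam) ^ ((t : ℝ) / (k - t)) * hdr

/-- **Hoffman-type bound for even uniform hypergraphs** (Theorem 3.1, inequality part).
Let `k` be even, `t` odd, `0 < t < k`. Let `H = (V, E)` be a `k`-uniform hypergraph with
`n` vertices, `m ≥ 1` edges and minimum degree `δ`, and let `lam` be the least element of
`{k·∑_{e∈E} ∏_{i∈e} x i : ∑ i, x i ^ k = 1}` (the minimum H-eigenvalue of the adjacency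
tensor). Then the `t`-independence number `α` satisfies the stated bound. -/
theorem hoffman_bound_even_hypergraph
    {V : Type*} [Fintype V] [DecidableEq V]
    (k t : ℕ) (hk : Even k) (ht : Odd t) (ht0 : 0 < t) (htk : t < k)
    (E : Finset (Finset V)) (huniform : ∀ e ∈ E, e.card = k) (hm : 1 ≤ E.card)
    (δ : ℕ) (hδ : IsLeast (Set.range fun i : V => (E.filter fun e => i ∈ e).card) δ)
    (lam : ℝ)
    (hlam : IsLeast {y : ℝ | ∃ x : V → ℝ, ∑ i, x i ^ k = 1 ∧
      y = k * ∑ e ∈ E, ∏ i ∈ e, x i} lam)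
    (α : ℕ)
    (hα : IsGreatest {c : ℕ | ∃ S : Finset V,
      (∀ e ∈ E, (e ∩ S).card = 0 ∨ (e ∩ S).card = t) ∧ S.card = c} α) :
    (α : ℝ) ≤ t * (k * E.card - Fintype.card V * lam) * (-lam) ^ ((t : ℝ) / (k - t)) /
      ((k - t) * (δ : ℝ) ^ ((k : ℝ) / (k - t)) +
        (k * δ - t * lam) * (-lam) ^ ((t : ℝ) / (k - t))) := by
  obtain ⟨S, hS : IsTIndependent E t S, rfl⟩ := hα.1
  obtain ⟨e, he⟩ := card_pos.1 hm
  have hk0 : k ≠ 0 := (ht0.trans htk).ne'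
  have hray := mul_sum_pow_le_of_mem_lowerBounds hk hk0 huniform hlam.2
  have hL : 0 < -lam := by linarith [le_neg_one_of_forall_mul_sum_pow_le hk hk0 huniform he hray]
  have hcount : (#S * δ : ℝ) ≤ t * #{e ∈ E | #(e ∩ S) = t} := by
    exact_mod_cast hS.card_mul_le fun i => hδ.2 ⟨i, rfl⟩
  obtain ⟨r, hr, hδr⟩ : ∃ r : ℝ, 0 ≤ r ∧ (δ : ℝ) = -lam * r ^ (k - t) :=
    have hq : 0 ≤ δ / -lam := div_nonneg δ.cast_nonneg hL.le
    ⟨_, Real.rpow_nonneg hq _, by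
      rw [Real.rpow_inv_natCast_pow hq (Nat.sub_pos_of_lt htk).ne', mul_div_cancel₀ _ hL.ne']⟩
  have htest := hray fun i => if i ∈ S then -r else 1
  rw [sum_ite_mem_pow, hS.edgeProductSum_ite, hk.neg_pow, ht.neg_pow] at htest
  have hμ : 0 < (-lam) ^ ((t : ℝ) / (k - t)) := Real.rpow_pos_of_pos hL _
  have hden : 0 < (k - t) * (δ : ℝ) ^ ((k : ℝ) / (k - t)) +
      (k * δ - t * lam) * (-lam) ^ ((t : ℝ) / (k - t)) := by
    have htk' : (t : ℝ) < k := by exact_mod_cast htk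
    have ht0' : (0 : ℝ) < t := by exact_mod_cast ht0
    exact add_pos_of_nonneg_of_pos (mul_nonneg (by linarith) (by positivity))
      (mul_pos (by nlinarith) hμ)
  rw [le_div_iff₀ hden, hoffman_denominator_eq htk (neg_pos.1 hL) hr hδr, ← mul_assoc]
  refine mul_le_mul_of_nonneg_right ?_ hμ.le
  linear_combination (t : ℝ) * htest + k * (1 + r ^ t) * hcount
end

section
/- Let k be an even integer and t an even integer with 0 < t < k. Let H = (V,E) be a k-uniform hypergraph with n vertices, m ≥ 1 edges, and minimum degree δ. Then there exists a sign function ε : E → {−1, 1} such that, with λ the least element of the set {k·∑_{e∈E} ε(e)·∏_{i∈e} x_i : x ∈ ℝ^V, ∑_{i∈V} x_i^k = 1} (the minimum H-eigenvalue of the corresponding signed adjacency tensor of H), the t-independence number satisfies α_t(H) ≤ t(km − nλ)·(−λ)^{t/(k−t)} / ( (k−t)·δ^{k/(k−t)} + (kδ − tλ)·(−λ)^{t/(k−t)} ). -/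
/-!
Take a maximum `t`-independent set `S` and give an edge the sign `-1` exactly when it meets `S`
in `t` vertices. Since `lam` is the least value of the form on the unit `ℓ^k`-sphere and the form
is `k`-homogeneous, `lam * ∑ x_i ^ k ≤ k * F(x)` whenever `∑ x_i ^ k > 0`. A vector supported on a
single edge gives `lam < 0`. For `x = a` on `S` and `1` elsewhere, every edge contributes
`ε(e) a ^ |e ∩ S| = 1 - |e ∩ S| (1 + a ^ t) / t` (this holds for both allowed sizes `0` and `t`),
so double counting with minimum degree `δ` bounds `F(x)`. Choosing `a ^ (k - t) = δ / (-lam)`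
balances the terms `-lam * α * a ^ k` and `δ * α * a ^ t`, and solving for `α` gives the bound.
-/

open Finset

section SignedForm

variable {V : Type*}

def signedForm (E : Finset (Finset V)) (ε : Finset V → ℝ) (x : V → ℝ) : ℝ :=
  ∑ e ∈ E, ε e * ∏ i ∈ e, x i

variable {k : ℕ} {E : Finset (Finset V)} {ε : Finset V → ℝ}

theorem signedForm_const_mul (huniform : ∀ e ∈ E, #e = k) (c : ℝ) (x : V → ℝ) :
    signedForm E ε (fun i => c * x i) = c ^ k * signedForm E ε x := by
  rw [signedForm, signedForm, mul_sum]
  refine sum_congr rfl fun e he => ?_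
  rw [prod_mul_distrib, prod_const, huniform e he]
  ring

theorem mul_sum_pow_le_of_isLeast [Fintype V] (hk : 0 < k) (huniform : ∀ e ∈ E, #e = k)
    {lam : ℝ}
    (hlam : IsLeast {y : ℝ | ∃ x : V → ℝ, ∑ i, x i ^ k = 1 ∧ y = k * signedForm E ε x} lam)
    (x : V → ℝ) (hx : 0 < ∑ i, x i ^ k) :
    lam * ∑ i, x i ^ k ≤ k * signedForm E ε x := by
  set s := ∑ i, x i ^ k
  set c : ℝ := s ^ (-(k : ℝ)⁻¹)
  have hck : c ^ k = s⁻¹ := by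
    rw [← Real.rpow_natCast, ← Real.rpow_mul hx.le, neg_mul, inv_mul_cancel₀ (by positivity),
      Real.rpow_neg_one]
  have hnormalized : ∑ i, (c * x i) ^ k = 1 := by
    simp only [mul_pow, ← mul_sum, hck]
    exact inv_mul_cancel₀ hx.ne'
  have hle := hlam.2 ⟨_, hnormalized, rfl⟩
  rw [signedForm_const_mul huniform, hck] at hle
  rw [mul_comm, ← le_div_iff₀' hx]
  calc lam ≤ k * (s⁻¹ * signedForm E ε x) := hle
    _ = k * signedForm E ε x / s := by ring

end SignedForm

section EdgeVector

variable {V : Type*} [DecidableEq V] {k : ℕ} {E : Finset (Finset V)} {ε : Finset V → ℝ}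

def edgeVector (e₀ : Finset V) (v₀ : V) (y : ℝ) : V → ℝ :=
  fun i => if i ∈ e₀ then (if i = v₀ then y else 1) else 0

theorem signedForm_edgeVector (huniform : ∀ e ∈ E, #e = k) {e₀ : Finset V} (he₀ : e₀ ∈ E)
    {v₀ : V} (hv₀ : v₀ ∈ e₀) (y : ℝ) :
    signedForm E ε (edgeVector e₀ v₀ y) = ε e₀ * y := by
  rw [signedForm, sum_eq_single_of_mem e₀ he₀]
  · rw [← mul_prod_erase e₀ _ hv₀, prod_eq_one fun i hi => by
      simp [edgeVector, ne_of_mem_erase hi, mem_of_mem_erase hi]]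
    simp [edgeVector, hv₀]
  · intro e he hne
    obtain ⟨i, hie, hie₀⟩ := not_subset.mp fun hsub =>
      hne (eq_of_subset_of_card_le hsub (by rw [huniform e he, huniform e₀ he₀]))
    rw [prod_eq_zero hie (by simp [edgeVector, hie₀]), mul_zero]

theorem sum_pow_edgeVector [Fintype V] (hk : k ≠ 0) {e₀ : Finset V} (he₀ : #e₀ = k) {v₀ : V}
    (hv₀ : v₀ ∈ e₀) (y : ℝ) :
    ∑ i, edgeVector e₀ v₀ y i ^ k = y ^ k + (k - 1) := by
  simp only [edgeVector, ite_pow, one_pow, zero_pow hk]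
  rw [sum_ite_mem, univ_inter, ← add_sum_erase e₀ _ hv₀, if_pos rfl,
    sum_congr rfl fun i hi => if_neg (ne_of_mem_erase hi)]
  simp [card_erase_of_mem hv₀, he₀, Nat.cast_sub (Nat.one_le_iff_ne_zero.mpr hk)]

theorem neg_of_isLeast [Fintype V] (hk : 2 ≤ k) (huniform : ∀ e ∈ E, #e = k)
    {e₀ : Finset V} (he₀ : e₀ ∈ E) (hε : ε e₀ = 1 ∨ ε e₀ = -1) {lam : ℝ}
    (hlam : IsLeast {y : ℝ | ∃ x : V → ℝ, ∑ i, x i ^ k = 1 ∧ y = k * signedForm E ε x} lam) :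
    lam < 0 := by
  obtain ⟨v₀, hv₀⟩ := card_pos.mp (by rw [huniform e₀ he₀]; omega : 0 < #e₀)
  -- `|y| < 1` keeps `∑ x_i ^ k = y ^ k + (k - 1)` positive whatever the parity of `k`.
  set y := -ε e₀ / 2
  have habs : |y| = 1 / 2 := by rcases hε with h | h <;> norm_num [y, h]
  have hy : -1 < y ^ k := by
    have : |y| ^ k < 1 := pow_lt_one₀ (abs_nonneg y) (by rw [habs]; norm_num) (by omega)
    linarith [neg_abs_le (y ^ k), abs_pow y k]
  have hform : ε e₀ * y = -1 / 2 := by rcases hε with h | h <;> norm_num [y, h]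
  have hkR : (2 : ℝ) ≤ k := by exact_mod_cast hk
  have hs : 0 < y ^ k + (k - 1) := by linarith
  have hray := mul_sum_pow_le_of_isLeast (by omega) huniform hlam _
    (by rwa [sum_pow_edgeVector (by omega) (huniform e₀ he₀) hv₀])
  rw [sum_pow_edgeVector (by omega) (huniform e₀ he₀) hv₀,
    signedForm_edgeVector huniform he₀ hv₀, hform] at hray
  exact neg_of_mul_neg_left (hray.trans_lt (by linarith : (k : ℝ) * (-1 / 2) < 0)) hs.le

end EdgeVector

section MeetSign

variable {V : Type*} [DecidableEq V]

def meetSign (S : Finset V) (t : ℕ) (e : Finset V) : ℝ := if #(e ∩ S) = t then -1 else 1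

theorem meetSign_eq_one_or_neg_one (S : Finset V) (t : ℕ) (e : Finset V) :
    meetSign S t e = 1 ∨ meetSign S t e = -1 := by
  unfold meetSign; split_ifs <;> simp

variable {E : Finset (Finset V)} {S : Finset V} {t : ℕ}

theorem mul_meetSign_mul_pow {e : Finset V} (hS : #(e ∩ S) = 0 ∨ #(e ∩ S) = t) (a : ℝ) :
    t * (meetSign S t e * a ^ #(e ∩ S)) = t - #(e ∩ S) * (1 + a ^ t) := by
  rcases hS with h | h
  · by_cases ht : t = 0 <;> simp [meetSign, h, ht, eq_comm]
  · rw [meetSign, if_pos h, h]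
    ring

theorem mul_signedForm_meetSign_le (hS : ∀ e ∈ E, #(e ∩ S) = 0 ∨ #(e ∩ S) = t) {δ : ℕ}
    (hδ : ∀ i, δ ≤ #{e ∈ E | i ∈ e}) {a : ℝ} (ha : 0 ≤ a) :
    t * signedForm E (meetSign S t) (fun i => if i ∈ S then a else 1) ≤
      t * #E - #S * δ * (1 + a ^ t) := by
  have hcount : (#S * δ : ℝ) ≤ ∑ e ∈ E, (#(e ∩ S) : ℝ) := by
    simp_rw [inter_comm _ S]
    exact_mod_cast le_sum_card_inter fun i _ => hδ i
  simp only [signedForm, prod_ite_mem, prod_const, mul_sum]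
  rw [sum_congr rfl fun e he => mul_meetSign_mul_pow (hS e he) a, sum_sub_distrib, sum_const,
    nsmul_eq_mul, ← sum_mul]
  linarith [mul_le_mul_of_nonneg_right hcount (by positivity : (0 : ℝ) ≤ 1 + a ^ t)]

end MeetSign

theorem sum_pow_ite_mem {V : Type*} [Fintype V] [DecidableEq V] (S : Finset V) (a : ℝ) (k : ℕ) :
    ∑ i, (if i ∈ S then a else 1) ^ k = #S * a ^ k + (Fintype.card V - #S) := by
  simp only [ite_pow, one_pow]
  rw [sum_ite, sum_const, sum_const, filter_mem_eq_inter, univ_inter, filter_not,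
    filter_mem_eq_inter, univ_inter, card_sdiff_of_subset (subset_univ S)]
  simp [Nat.cast_sub (card_le_univ S)]

theorem exists_balancing_weight {k t : ℕ} (htk : t < k) {μ δ : ℝ} (hμ : 0 < μ) (hδ : 0 ≤ δ) :
    ∃ a : ℝ, 0 ≤ a ∧ μ * a ^ k = δ * a ^ t ∧
      δ * a ^ t * μ ^ ((t : ℝ) / (k - t)) = δ ^ ((k : ℝ) / (k - t)) := by
  have hq : 0 ≤ δ / μ := div_nonneg hδ hμ.le
  have hkt : ((k - t : ℕ) : ℝ) = k - t := Nat.cast_sub htk.le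
  have hktR : (0 : ℝ) < k - t := by rw [← hkt]; exact_mod_cast Nat.sub_pos_of_lt htk
  set a := (δ / μ) ^ (((k - t : ℕ) : ℝ)⁻¹)
  have hakt : a ^ (k - t) = δ / μ := Real.rpow_inv_natCast_pow hq (by omega)
  have hat : a ^ t = (δ / μ) ^ ((t : ℝ) / (k - t)) := by
    rw [← Real.rpow_natCast, ← Real.rpow_mul hq, hkt, inv_mul_eq_div]
  refine ⟨a, by positivity, ?_, ?_⟩
  · rw [← Nat.add_sub_cancel' htk.le, pow_add, hakt]
    field_simp
  · rw [hat, mul_assoc, ← Real.mul_rpow hq hμ.le, div_mul_cancel₀ _ hμ.ne',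
      ← Real.rpow_one_add' hδ (by positivity)]
    congr 1
    field_simp
    ring

theorem card_mul_le_of_isLeast {V : Type*} [Fintype V] [DecidableEq V] {k t δ : ℕ} (hk : 0 < k)
    {E : Finset (Finset V)} (huniform : ∀ e ∈ E, #e = k) (hδ : ∀ i, δ ≤ #{e ∈ E | i ∈ e})
    {S : Finset V} (hS : ∀ e ∈ E, #(e ∩ S) = 0 ∨ #(e ∩ S) = t) (hS_lt : #S < Fintype.card V)
    {lam : ℝ} (hlam : IsLeast {y : ℝ | ∃ x : V → ℝ, ∑ i, x i ^ k = 1 ∧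
      y = k * signedForm E (meetSign S t) x} lam)
    {a : ℝ} (ha : 0 ≤ a) (hbalance : -lam * a ^ k = δ * a ^ t) :
    #S * (k * δ + t * -lam + (k - t) * (δ * a ^ t)) ≤ t * (k * #E + Fintype.card V * -lam) := by
  have hsum := sum_pow_ite_mem S a k
  have hpos : 0 < ∑ i, (if i ∈ S then a else 1) ^ k := by
    have : (#S : ℝ) + 1 ≤ Fintype.card V := by exact_mod_cast hS_lt
    have : (0 : ℝ) ≤ #S * a ^ k := mul_nonneg (#S).cast_nonneg (pow_nonneg ha k)
    rw [hsum]
    linarith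
  have hray := mul_sum_pow_le_of_isLeast hk huniform hlam _ hpos
  rw [hsum] at hray
  have hform := mul_signedForm_meetSign_le hS hδ ha
  linarith [mul_le_mul_of_nonneg_left hray t.cast_nonneg,
    mul_le_mul_of_nonneg_left hform k.cast_nonneg, congrArg (· * (t * #S : ℝ)) hbalance]

theorem hoffman_bound_even_hypergraph_signed_general
    {V : Type*} [Fintype V] [DecidableEq V]
    (k t : ℕ) (ht0 : 0 < t) (htk : t < k)
    (E : Finset (Finset V)) (huniform : ∀ e ∈ E, e.card = k) (hm : 1 ≤ E.card)
    (δ : ℕ) (hδ : IsLeast (Set.range fun i : V => (E.filter fun e => i ∈ e).card) δ)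
    (α : ℕ)
    (hα : IsGreatest {c : ℕ | ∃ S : Finset V,
      (∀ e ∈ E, (e ∩ S).card = 0 ∨ (e ∩ S).card = t) ∧ S.card = c} α) :
    ∃ ε : Finset V → ℝ, (∀ e ∈ E, ε e = 1 ∨ ε e = -1) ∧
      ∀ lam : ℝ,
        IsLeast {y : ℝ | ∃ x : V → ℝ, ∑ i, x i ^ k = 1 ∧
          y = k * ∑ e ∈ E, ε e * ∏ i ∈ e, x i} lam →
        (α : ℝ) ≤ t * (k * E.card - Fintype.card V * lam) * (-lam) ^ ((t : ℝ) / (k - t)) /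
          ((k - t) * (δ : ℝ) ^ ((k : ℝ) / (k - t)) +
            (k * δ - t * lam) * (-lam) ^ ((t : ℝ) / (k - t))) := by
  obtain ⟨⟨S, hS, rfl⟩, -⟩ := hα
  refine ⟨meetSign S t, fun e _ => meetSign_eq_one_or_neg_one S t e, fun lam hlam => ?_⟩
  obtain ⟨e₀, he₀⟩ := card_pos.mp hm
  have hμ : 0 < -lam := neg_pos.mpr <|
    neg_of_isLeast (by omega) huniform he₀ (meetSign_eq_one_or_neg_one S t e₀) hlam
  have hS_lt : #S < Fintype.card V := by
    refine card_lt_card (ssubset_univ_iff.mpr ?_)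
    rintro rfl
    have := hS e₀ he₀
    rw [inter_univ, huniform e₀ he₀] at this
    omega
  obtain ⟨a, ha, hbalance, hpow⟩ := exists_balancing_weight htk hμ (Nat.cast_nonneg δ)
  have hmain := card_mul_le_of_isLeast (by omega) huniform (fun i => hδ.2 ⟨i, rfl⟩) hS hS_lt
    hlam ha hbalance
  have hw : 0 < (-lam) ^ ((t : ℝ) / (k - t)) := Real.rpow_pos_of_pos hμ _
  have hden : 0 < (k - t) * (δ : ℝ) ^ ((k : ℝ) / (k - t)) +
      (k * δ - t * lam) * (-lam) ^ ((t : ℝ) / (k - t)) := by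
    have hkt : (0 : ℝ) < k - t := sub_pos.mpr (by exact_mod_cast htk)
    have htlam : (0 : ℝ) < t * -lam := mul_pos (by exact_mod_cast ht0) hμ
    have hkδ : (0 : ℝ) ≤ k * δ := by positivity
    exact add_pos_of_nonneg_of_pos (by positivity) (mul_pos (by linarith) hw)
  rw [le_div_iff₀ hden, ← hpow]
  linarith [mul_le_mul_of_nonneg_right hmain hw.le]

/-- **Hoffman-type bound via signed adjacency tensors** (Theorem 3.2). Let `k` and `t` be
even with `0 < t < k`, and let `H = (V, E)` be a `k`-uniform hypergraph with `m ≥ 1` edges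
and minimum degree `δ`. Then there is a sign function `ε : E → {−1, 1}` such that the
`t`-independence number is bounded by the Hoffman-type expression in the minimum
H-eigenvalue `lam` of the corresponding signed adjacency tensor. -/
theorem hoffman_bound_even_hypergraph_signed
    {V : Type*} [Fintype V] [DecidableEq V]
    (k t : ℕ) (hk : Even k) (ht : Even t) (ht0 : 0 < t) (htk : t < k)
    (E : Finset (Finset V)) (huniform : ∀ e ∈ E, e.card = k) (hm : 1 ≤ E.card)
    (δ : ℕ) (hδ : IsLeast (Set.range fun i : V => (E.filter fun e => i ∈ e).card) δ)
    (α : ℕ)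
    (hα : IsGreatest {c : ℕ | ∃ S : Finset V,
      (∀ e ∈ E, (e ∩ S).card = 0 ∨ (e ∩ S).card = t) ∧ S.card = c} α) :
    ∃ ε : Finset V → ℝ, (∀ e ∈ E, ε e = 1 ∨ ε e = -1) ∧
      ∀ lam : ℝ,
        IsLeast {y : ℝ | ∃ x : V → ℝ, ∑ i, x i ^ k = 1 ∧
          y = k * ∑ e ∈ E, ε e * ∏ i ∈ e, x i} lam →
        (α : ℝ) ≤ t * (k * E.card - Fintype.card V * lam) * (-lam) ^ ((t : ℝ) / (k - t)) /
          ((k - t) * (δ : ℝ) ^ ((k : ℝ) / (k - t)) +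
            (k * δ - t * lam) * (-lam) ^ ((t : ℝ) / (k - t))) :=
  hoffman_bound_even_hypergraph_signed_general k t ht0 htk E huniform hm δ hδ α hα
end

section
/- Let G be a finite simple graph on n vertices with minimum degree δ and average degree d̄ > 0, and let λ be the minimum eigenvalue of the adjacency matrix of G. Then the independence number satisfies α(G) ≤ −λ·n·(d̄ − λ) / (δ − λ)². -/
/-!
For the least eigenvalue `λ` of `A = A_G`, the matrix `A - λI` is positive semidefinite, so the
Cauchy–Schwarz inequality for its form, applied to the indicator vector `s` of an independent set
`S` and the all-ones vector `𝟙`, gives `(sᵀA𝟙 - λ|S|)² ≤ (-λ|S|)(𝟙ᵀA𝟙 - λn)`, because `sᵀAs = 0`.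
Here `sᵀA𝟙 = ∑_{v ∈ S} d_v ≥ |S|δ` and `𝟙ᵀA𝟙 = n·d̄`, while testing `A - λI` on `e_u - e_v` for an
edge `uv` shows `λ ≤ -1 < δ`; hence `|S|(δ - λ)² ≤ -λn(d̄ - λ)`.
-/
open Finset Matrix SimpleGraph
open scoped MatrixOrder

namespace Matrix

variable {n : Type*} [Fintype n]

lemma posSemidef_sub_algebraMap_of_mem_lowerBounds_spectrum [DecidableEq n] {A : Matrix n n ℝ}
    (hA : A.IsHermitian) {lam : ℝ} (hlam : lam ∈ lowerBounds (spectrum ℝ A)) :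
    (A - algebraMap ℝ (Matrix n n ℝ) lam).PosSemidef :=
  le_iff.mp ((algebraMap_le_iff_le_spectrum hA).mpr fun _ hx => hlam hx)

lemma dotProduct_sub_algebraMap_mulVec {R : Type*} [CommRing R] [DecidableEq n]
    (A : Matrix n n R) (c : R) (x y : n → R) :
    x ⬝ᵥ (A - algebraMap R (Matrix n n R) c) *ᵥ y = x ⬝ᵥ A *ᵥ y - c * (x ⬝ᵥ y) := by
  rw [Algebra.algebraMap_eq_smul_one, sub_mulVec, smul_mulVec, one_mulVec, dotProduct_sub,
    dotProduct_smul, smul_eq_mul]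

lemma PosSemidef.dotProduct_mulVec_sq_le {B : Matrix n n ℝ} (hB : B.PosSemidef) (x y : n → ℝ) :
    (x ⬝ᵥ B *ᵥ y) ^ 2 ≤ (x ⬝ᵥ B *ᵥ x) * (y ⬝ᵥ B *ᵥ y) := by
  have hsymm : y ⬝ᵥ B *ᵥ x = x ⬝ᵥ B *ᵥ y := by
    rw [dotProduct_mulVec, ← mulVec_transpose, dotProduct_comm,
      ← conjTranspose_eq_transpose_of_trivial, hB.isHermitian.eq]
  have hquad (t : ℝ) :
      0 ≤ (x ⬝ᵥ B *ᵥ x) * (t * t) + 2 * (x ⬝ᵥ B *ᵥ y) * t + y ⬝ᵥ B *ᵥ y := by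
    have := hB.dotProduct_mulVec_nonneg (t • x + y)
    simp only [star_trivial, mulVec_add, mulVec_smul, dotProduct_add, add_dotProduct,
      dotProduct_smul, smul_dotProduct, smul_eq_mul, hsymm] at this
    linarith
  have := discrim_le_zero hquad
  rw [discrim] at this
  linarith

end Matrix

namespace SimpleGraph

variable {V : Type*} [Fintype V] [DecidableEq V] {G : SimpleGraph V} [DecidableRel G.Adj]
  {lam : ℝ}

lemma le_neg_one_of_mem_lowerBounds_spectrum_adjMatrix
    (hlam : lam ∈ lowerBounds (spectrum ℝ (G.adjMatrix ℝ))) {u v : V} (huv : G.Adj u v) :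
    lam ≤ -1 := by
  set x : V → ℝ := Pi.single u 1 - Pi.single v 1
  have hB := posSemidef_sub_algebraMap_of_mem_lowerBounds_spectrum (G.isHermitian_adjMatrix ℝ) hlam
  have hxAx : x ⬝ᵥ G.adjMatrix ℝ *ᵥ x = -2 := by
    norm_num [x, mulVec_sub, dotProduct_sub, sub_dotProduct, huv, huv.symm, huv.ne]
  have hxx : x ⬝ᵥ x = 2 := by
    norm_num [x, dotProduct_sub, huv.ne]
  have := hB.dotProduct_mulVec_nonneg x
  rw [star_trivial, dotProduct_sub_algebraMap_mulVec, hxAx, hxx] at this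
  linarith

lemma IsIndepSet.sq_sum_degree_sub_le {S : Finset V} (hS : G.IsIndepSet S)
    (hlam : lam ∈ lowerBounds (spectrum ℝ (G.adjMatrix ℝ))) :
    (∑ v ∈ S, (G.degree v : ℝ) - lam * #S) ^ 2 ≤
      -lam * #S * (∑ v, (G.degree v : ℝ) - lam * Fintype.card V) := by
  have hB := posSemidef_sub_algebraMap_of_mem_lowerBounds_spectrum (G.isHermitian_adjMatrix ℝ) hlam
  have := hB.dotProduct_mulVec_sq_le ((S : Set V).indicator 1) 1
  have hss : (S : Set V).indicator 1 ⬝ᵥ G.adjMatrix ℝ *ᵥ (S : Set V).indicator 1 = 0 := by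
    simp only [dotProduct_mulVec_adjMatrix, Set.indicator_apply, Pi.one_apply]
    refine sum_eq_zero fun u _ => sum_eq_zero fun v _ => ?_
    split_ifs with huv hu hv
    · exact absurd huv (hS hu hv huv.ne)
    all_goals simp
  have hs1 : (S : Set V).indicator 1 ⬝ᵥ G.adjMatrix ℝ *ᵥ 1 = ∑ v ∈ S, (G.degree v : ℝ) := by
    simp [dotProduct, Set.indicator_apply]
  have h11 : (1 : V → ℝ) ⬝ᵥ G.adjMatrix ℝ *ᵥ 1 = ∑ v, (G.degree v : ℝ) := by
    simp [dotProduct]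
  simp only [dotProduct_sub_algebraMap_mulVec, hss, hs1, h11] at this
  simpa [dotProduct, Set.indicator_apply] using this

lemma IsIndepSet.card_mul_sq_le {S : Finset V} (hS : G.IsIndepSet S) (hSne : S.Nonempty)
    (hlam : lam ∈ lowerBounds (spectrum ℝ (G.adjMatrix ℝ))) {δ : ℕ} (hδ : ∀ v, δ ≤ G.degree v)
    (hlamδ : lam ≤ δ) :
    #S * (δ - lam) ^ 2 ≤ -lam * (∑ v, (G.degree v : ℝ) - lam * Fintype.card V) := by
  have hS_pos : (0 : ℝ) < #S := by exact_mod_cast hSne.card_pos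
  have hdeg : #S * (δ : ℝ) ≤ ∑ v ∈ S, (G.degree v : ℝ) := by
    simpa using card_nsmul_le_sum S (fun v => (G.degree v : ℝ)) δ fun v _ => by exact_mod_cast hδ v
  have hsq : (#S * (δ - lam)) ^ 2 ≤ (∑ v ∈ S, (G.degree v : ℝ) - lam * #S) ^ 2 :=
    pow_le_pow_left₀ (by positivity) (by linarith) 2
  have := hsq.trans (hS.sq_sum_degree_sub_le hlam)
  refine le_of_mul_le_mul_left ?_ hS_pos
  linarith

end SimpleGraph

theorem independence_number_ratio_bound_general
    {V : Type*} [Fintype V] [DecidableEq V]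
    (G : SimpleGraph V) [DecidableRel G.Adj]
    (δ : ℕ) (hδ : IsLeast (Set.range fun v : V => G.degree v) δ)
    (dbar : ℝ) (hdbar : dbar = (∑ v, (G.degree v : ℝ)) / Fintype.card V)
    (hdbar_pos : 0 < dbar)
    (lam : ℝ) (hlam : IsLeast (spectrum ℝ (G.adjMatrix ℝ)) lam)
    (α : ℕ)
    (hα : IsGreatest {c : ℕ | ∃ S : Finset V,
      (∀ u ∈ S, ∀ v ∈ S, ¬ G.Adj u v) ∧ S.card = c} α) :
    (α : ℝ) ≤ -lam * Fintype.card V * (dbar - lam) / (δ - lam) ^ 2 := by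
  have hsum : ∑ v, (G.degree v : ℝ) ≠ 0 := by
    rintro h
    rw [h, zero_div] at hdbar
    linarith
  obtain ⟨u, -, hu⟩ := exists_ne_zero_of_sum_ne_zero hsum
  obtain ⟨v, huv⟩ := (G.degree_pos_iff_exists_adj u).mp (Nat.pos_of_ne_zero (by exact_mod_cast hu))
  have hlam_le := le_neg_one_of_mem_lowerBounds_spectrum_adjMatrix hlam.2 huv
  obtain ⟨S, hS, rfl⟩ := hα.1
  have hSne : S.Nonempty := card_pos.mp (hα.2 ⟨{u}, by simp, card_singleton u⟩)
  have hlam_lt : lam < δ := by linarith [(δ.cast_nonneg : (0 : ℝ) ≤ δ)]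
  have key := IsIndepSet.card_mul_sq_le (fun x hx y hy _ => hS x hx y hy) hSne hlam.2
    (fun w => hδ.2 ⟨w, rfl⟩) hlam_lt.le
  have hN : (Fintype.card V : ℝ) ≠ 0 := by exact_mod_cast (Fintype.card_pos_iff.mpr ⟨u⟩).ne'
  rw [le_div_iff₀ (pow_pos (sub_pos.mpr hlam_lt) 2), hdbar]
  field_simp
  linarith

/-- **Ratio bound for the independence number of a general graph** (Corollary 4.1).
Let `G` be a graph on `n` vertices with minimum degree `δ`, average degree `d̄ > 0` and
minimum adjacency eigenvalue `lam`. Then `α(G) ≤ −λ·n·(d̄ − λ)/(δ − λ)²`. -/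
theorem independence_number_ratio_bound
    {V : Type*} [Fintype V] [Nonempty V] [DecidableEq V]
    (G : SimpleGraph V) [DecidableRel G.Adj]
    (δ : ℕ) (hδ : IsLeast (Set.range fun v : V => G.degree v) δ)
    (dbar : ℝ) (hdbar : dbar = (∑ v, (G.degree v : ℝ)) / Fintype.card V)
    (hdbar_pos : 0 < dbar)
    (lam : ℝ) (hlam : IsLeast (spectrum ℝ (G.adjMatrix ℝ)) lam)
    (α : ℕ)
    (hα : IsGreatest {c : ℕ | ∃ S : Finset V,
      (∀ u ∈ S, ∀ v ∈ S, ¬ G.Adj u v) ∧ S.card = c} α) :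
    (α : ℝ) ≤ -lam * Fintype.card V * (dbar - lam) / (δ - lam) ^ 2 :=
  independence_number_ratio_bound_general G δ hδ dbar hdbar hdbar_pos lam hlam α hα
end

section
/- Let G be a finite simple graph whose adjacency matrix has minimum eigenvalue λ < 0, and let S be an independent set of G such that every vertex i ∉ S has at least −λ neighbors in S, i.e. |{j ∈ S : {i,j} ∈ E(G)}| ≥ −λ. Then α(G) = |S|. -/
/-! For any independent set `T`, put `A = T \ S`, `B = S \ T` and evaluate the adjacency form at
`x = 1_A - 1_B`. As `A` and `B` are independent, `xᵀ A_G x = -2 e(A, B)`; every vertex of `A` has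
at least `-λ` neighbours in `B` (its neighbours in `S` avoid `T`), so `e(A, B) ≥ -λ |A|`. The
Rayleigh bound `λ ‖x‖² ≤ xᵀ A_G x` then reads `λ (|A| + |B|) ≤ 2λ |A|`, i.e. `|A| ≤ |B|` since
`λ < 0`, and hence `|T| ≤ |S|`. -/

open Finset Matrix

lemma Matrix.IsHermitian.mul_dotProduct_self_le_dotProduct_mulVec {n : Type*} [Fintype n]
    [DecidableEq n] {A : Matrix n n ℝ} (hA : A.IsHermitian) {lam : ℝ}
    (hlam : lam ∈ lowerBounds (spectrum ℝ A)) (x : n → ℝ) :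
    lam * (x ⬝ᵥ x) ≤ x ⬝ᵥ A *ᵥ x := by
  have hpsd : (A - algebraMap ℝ _ lam).PosSemidef := by
    refine posSemidef_iff_isHermitian_and_spectrum_nonneg.mpr ⟨hA.sub ?_, ?_⟩
    · simp [Algebra.algebraMap_eq_smul_one]
    · rw [← spectrum.sub_singleton_eq]
      rintro _ ⟨μ, hμ, _, rfl, rfl⟩
      exact sub_nonneg.mpr (hlam hμ)
  simpa [sub_mulVec, Algebra.algebraMap_eq_smul_one, smul_mulVec] using
    hpsd.dotProduct_mulVec_nonneg x

lemma Finset.indicator_dotProduct_indicator {V α : Type*} [Fintype V] [DecidableEq V]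
    [NonAssocSemiring α] (s t : Finset V) :
    (s : Set V).indicator 1 ⬝ᵥ (t : Set V).indicator (1 : V → α) = #(s ∩ t) := by
  rw [← filter_univ_mem (s ∩ t), ← sum_boole, dotProduct]
  refine sum_congr rfl fun i _ => ?_
  by_cases hi : i ∈ s <;> by_cases hj : i ∈ t <;> simp [hi, hj]

namespace SimpleGraph

variable {V : Type*} (G : SimpleGraph V) [DecidableRel G.Adj]

lemma card_interedges_eq_sum (s t : Finset V) :
    #(G.interedges s t) = ∑ i ∈ s, #{j ∈ t | G.Adj i j} := by
  rw [interedges_def, card_filter, sum_product]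
  simp only [card_filter]

lemma card_interedges_comm (s t : Finset V) : #(G.interedges s t) = #(G.interedges t s) := by
  have := G.symm
  exact Rel.card_interedges_comm s t

variable {G} in
lemma IsIndepSet.interedges_self_eq_empty {s : Finset V} (hs : G.IsIndepSet s) :
    G.interedges s s = ∅ := by
  ext ⟨i, j⟩
  simp only [mem_interedges_iff, notMem_empty, iff_false, not_and]
  exact fun hi hj hij => hs hi hj hij.ne hij

lemma indicator_dotProduct_adjMatrix_mulVec_indicator [Fintype V] {α : Type*}
    [NonAssocSemiring α] (s t : Finset V) :
    (s : Set V).indicator 1 ⬝ᵥ G.adjMatrix α *ᵥ (t : Set V).indicator 1 =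
      #(G.interedges s t) := by
  classical
  rw [← filter_univ_mem (G.interedges s t), ← sum_boole, dotProduct_mulVec_adjMatrix,
    ← Fintype.sum_prod_type']
  refine sum_congr rfl fun ⟨i, j⟩ _ => ?_
  by_cases hi : i ∈ s <;> by_cases hj : j ∈ t <;> simp [hi, hj, mem_interedges_iff]

theorem card_le_card_of_forall_neg_le_card_neighbors [Fintype V] [DecidableEq V] {lam : ℝ}
    (hlam : lam ∈ lowerBounds (spectrum ℝ (G.adjMatrix ℝ))) (hneg : lam < 0)
    {A B : Finset V} (hAB : Disjoint A B) (hA : G.IsIndepSet A) (hB : G.IsIndepSet B)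
    (hnbrs : ∀ i ∈ A, -lam ≤ #{j ∈ B | G.Adj i j}) :
    #A ≤ #B := by
  set x : V → ℝ := (A : Set V).indicator 1 - (B : Set V).indicator 1
  have hnorm : x ⬝ᵥ x = #A + #B := by
    simp only [x, sub_dotProduct, dotProduct_sub, indicator_dotProduct_indicator, inter_self,
      disjoint_iff_inter_eq_empty.mp hAB, inter_comm B A, card_empty]
    push_cast; ring
  have hquad : x ⬝ᵥ G.adjMatrix ℝ *ᵥ x = -2 * #(G.interedges A B) := by
    simp only [x, mulVec_sub, sub_dotProduct, dotProduct_sub,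
      indicator_dotProduct_adjMatrix_mulVec_indicator, hA.interedges_self_eq_empty,
      hB.interedges_self_eq_empty, G.card_interedges_comm B A, card_empty]
    push_cast; ring
  have hedges : -lam * #A ≤ #(G.interedges A B) := by
    rw [card_interedges_eq_sum, Nat.cast_sum, mul_comm, ← nsmul_eq_mul, ← sum_const]
    exact sum_le_sum hnbrs
  have hray := (G.isHermitian_adjMatrix ℝ).mul_dotProduct_self_le_dotProduct_mulVec hlam x
  rw [hnorm, hquad] at hray
  have : lam * #B ≤ lam * #A := by linarith
  exact_mod_cast (mul_le_mul_left_of_neg hneg).mp this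

end SimpleGraph

theorem independence_number_eq_of_spectral_condition_general
    {V : Type*} [Fintype V] [DecidableEq V]
    (G : SimpleGraph V) [DecidableRel G.Adj]
    (lam : ℝ) (hlam : IsLeast (spectrum ℝ (G.adjMatrix ℝ)) lam) (hneg : lam < 0)
    (S : Finset V)
    (hSindep : ∀ u ∈ S, ∀ v ∈ S, ¬ G.Adj u v)
    (hcond : ∀ i ∉ S, -lam ≤ ((S.filter fun j => G.Adj i j).card : ℝ))
    (α : ℕ)
    (hα : IsGreatest {c : ℕ | ∃ T : Finset V,
      (∀ u ∈ T, ∀ v ∈ T, ¬ G.Adj u v) ∧ T.card = c} α) :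
    α = S.card := by
  obtain ⟨⟨T, hTindep, rfl⟩, hmax⟩ := hα
  refine le_antisymm ?_ (hmax ⟨S, hSindep, rfl⟩)
  have hS : G.IsIndepSet S := fun u hu v hv _ => hSindep u hu v hv
  have hT : G.IsIndepSet T := fun u hu v hv _ => hTindep u hu v hv
  rw [← card_sdiff_le_card_sdiff_iff]
  refine G.card_le_card_of_forall_neg_le_card_neighbors hlam.2 hneg disjoint_sdiff_sdiff
    (hT.mono sdiff_subset) (hS.mono sdiff_subset) fun i hi => ?_
  obtain ⟨hiT, hiS⟩ := mem_sdiff.mp hi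
  have hsub : {j ∈ S | G.Adj i j} ⊆ {j ∈ S \ T | G.Adj i j} := fun j hj => by
    obtain ⟨hjS, hij⟩ := mem_filter.mp hj
    exact mem_filter.mpr ⟨mem_sdiff.mpr ⟨hjS, fun hjT => hTindep i hiT j hjT hij⟩, hij⟩
  exact (hcond i hiS).trans (by exact_mod_cast card_le_card hsub)

/-- **A spectral condition determining the independence number** (Theorem 4.1, first
conclusion). Let `G` be a graph with minimum adjacency eigenvalue `lam < 0`, and let `S`
be an independent set such that every vertex `i ∉ S` has at least `−λ` neighbours in `S`.
Then `α(G) = |S|`. -/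
theorem independence_number_eq_of_spectral_condition
    {V : Type*} [Fintype V] [Nonempty V] [DecidableEq V]
    (G : SimpleGraph V) [DecidableRel G.Adj]
    (lam : ℝ) (hlam : IsLeast (spectrum ℝ (G.adjMatrix ℝ)) lam) (hneg : lam < 0)
    (S : Finset V)
    (hSindep : ∀ u ∈ S, ∀ v ∈ S, ¬ G.Adj u v)
    (hcond : ∀ i ∉ S, -lam ≤ ((S.filter fun j => G.Adj i j).card : ℝ))
    (α : ℕ)
    (hα : IsGreatest {c : ℕ | ∃ T : Finset V,
      (∀ u ∈ T, ∀ v ∈ T, ¬ G.Adj u v) ∧ T.card = c} α) :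
    α = S.card :=
  independence_number_eq_of_spectral_condition_general G lam hlam hneg S hSindep hcond α hα
end

section
/- Let G be a finite simple graph on vertex set V whose adjacency matrix has minimum eigenvalue λ < 0, and let S be an independent set of G such that every vertex i ∉ S has at least −λ neighbors in S. Then for every positive integer k, the k-th strong power G^k — the simple graph on the vertex set of functions Fin k → V in which distinct u and v are adjacent if and only if for every coordinate i either u(i) = v(i) or {u(i), v(i)} ∈ E(G) — has independence number α(G^k) = |S|^k. (This realizes the paper's conclusion that the Shannon capacity Θ(G) = sup_k α(G^k)^{1/k} equals |S|.) -/
/-!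
Put `B = I - λ⁻¹ A`. Since `λ` is the least eigenvalue of `A` and `λ < 0`, `B` is positive
semidefinite; it has unit diagonal and vanishes on distinct non-adjacent pairs, and the
spectral condition says exactly that every row of `B` sums to at least `1` over `S`. The
Kronecker power `B^{⊗k}` inherits all of this for `G^k` and `S^k`. For independent sets
`S, T` of a graph carrying such a matrix `P`, testing positivity of `P` against
`1_T - 1_S` gives `0 ≤ |T| - 2 ∑_{u ∈ T, v ∈ S} P u v + |S| ≤ |S| - |T|`.
-/

/-- The `k`-th strong power `G^k` of a simple graph `G`: vertices are functions
`Fin k → V`, and distinct `u, v` are adjacent iff for every coordinate `i` either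
`u i = v i` or `u i` is adjacent to `v i` in `G`. -/
def SimpleGraph.strongPower {V : Type*} (G : SimpleGraph V) (k : ℕ) :
    SimpleGraph (Fin k → V) where
  Adj u v := u ≠ v ∧ ∀ i, u i = v i ∨ G.Adj (u i) (v i)
  symm := ⟨fun u v ⟨h1, h2⟩ => ⟨h1.symm, fun i => (h2 i).imp Eq.symm (fun h => G.adj_symm h)⟩⟩
  loopless := ⟨fun u ⟨h1, _⟩ => h1 rfl⟩

open Finset
open scoped ComplexOrder

namespace Matrix

variable {n R : Type*}

/-- Indexed by `Fin k → n` rather than built from iterated `⊗ₖ`, so that it lives on the vertex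
type of `SimpleGraph.strongPower`. -/
def kroneckerPow [CommMonoid R] (B : Matrix n n R) (k : ℕ) :
    Matrix (Fin k → n) (Fin k → n) R :=
  of fun u v => ∏ i, B (u i) (v i)

@[simp]
theorem kroneckerPow_apply [CommMonoid R] (B : Matrix n n R) {k : ℕ} (u v : Fin k → n) :
    B.kroneckerPow k u v = ∏ i, B (u i) (v i) :=
  rfl

theorem kroneckerPow_succ [CommMonoid R] (B : Matrix n n R) (k : ℕ) :
    B.kroneckerPow (k + 1) =
      B.submatrix (· 0) (· 0) ⊙ (B.kroneckerPow k).submatrix Fin.tail Fin.tail := by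
  ext u v
  simp [Fin.prod_univ_succ, Fin.tail]

theorem PosSemidef.kroneckerPow {𝕜 : Type*} [RCLike 𝕜] {B : Matrix n n 𝕜} (hB : B.PosSemidef) :
    ∀ k, (B.kroneckerPow k).PosSemidef
  | 0 => by
    convert posSemidef_vecMulVec_self_star (1 : (Fin 0 → n) → 𝕜)
    ext u v
    simp [vecMulVec]
  | k + 1 => by
    rw [kroneckerPow_succ]
    exact (hB.submatrix _).hadamard ((hB.kroneckerPow k).submatrix _)

theorem sum_piFinset_kroneckerPow_apply [CommSemiring R] [DecidableEq n] (B : Matrix n n R)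
    (S : Finset n) {k : ℕ} (u : Fin k → n) :
    ∑ v ∈ Fintype.piFinset fun _ => S, B.kroneckerPow k u v = ∏ i, ∑ b ∈ S, B (u i) b :=
  (prod_univ_sum _ _).symm

open scoped MatrixOrder in
theorem IsHermitian.posSemidef_sub_smul_one {𝕜 : Type*} [RCLike 𝕜] [Fintype n] [DecidableEq n]
    {A : Matrix n n 𝕜} (hA : A.IsHermitian) {lam : ℝ} (hlam : lam ∈ lowerBounds (spectrum ℝ A)) :
    (A - lam • 1).PosSemidef := by
  rw [← Algebra.algebraMap_eq_smul_one, ← Matrix.le_iff]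
  exact (algebraMap_le_iff_le_spectrum hA).2 hlam

theorem indicator_dotProduct_mulVec_indicator [Fintype n] [DecidableEq n] [NonAssocSemiring R]
    (P : Matrix n n R) (T S : Finset n) :
    (fun u => if u ∈ T then 1 else 0) ⬝ᵥ P *ᵥ (fun v => if v ∈ S then 1 else 0) =
      ∑ u ∈ T, ∑ v ∈ S, P u v := by
  simp [dotProduct, mulVec, ite_mul, sum_ite_mem]

end Matrix

open Matrix

namespace SimpleGraph

theorem card_le_card_of_posSemidef {W : Type*} [Fintype W] [DecidableEq W] {H : SimpleGraph W}
    {P : Matrix W W ℝ} (hP : P.PosSemidef) (hdiag : ∀ u, P u u = 1)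
    (hzero : ∀ u v, u ≠ v → ¬H.Adj u v → P u v = 0) {S T : Finset W} (hS : H.IsIndepSet S)
    (hT : H.IsIndepSet T) (hrow : ∀ u, 1 ≤ ∑ v ∈ S, P u v) : #T ≤ #S := by
  have hself : ∀ {U : Finset W}, H.IsIndepSet U → ∑ u ∈ U, ∑ v ∈ U, P u v = #U := by
    intro U hU
    rw [card_eq_sum_ones, Nat.cast_sum]
    refine sum_congr rfl fun u hu => ?_
    rw [sum_eq_single_of_mem u hu fun v hv hvu => hzero u v hvu.symm (hU hu hv hvu.symm), hdiag,
      Nat.cast_one]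
  have hcross : (#T : ℝ) ≤ ∑ u ∈ T, ∑ v ∈ S, P u v := by
    simpa using card_nsmul_le_sum T _ 1 fun u _ => hrow u
  have hsymm : ∑ u ∈ S, ∑ v ∈ T, P u v = ∑ u ∈ T, ∑ v ∈ S, P u v := by
    refine sum_comm.trans (sum_congr rfl fun u _ => sum_congr rfl fun v _ => ?_)
    simpa using hP.1.apply u v
  have hquad := hP.dotProduct_mulVec_nonneg
    ((fun u => if u ∈ T then 1 else 0) - fun u => if u ∈ S then 1 else 0)
  simp only [star_trivial, sub_dotProduct, mulVec_sub, dotProduct_sub,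
    indicator_dotProduct_mulVec_indicator, hself hS, hself hT, hsymm] at hquad
  exact_mod_cast (by linarith : (#T : ℝ) ≤ #S)

section

variable {V : Type*} (G : SimpleGraph V)

theorem kroneckerPow_apply_eq_zero_of_not_adj {R : Type*} [CommMonoidWithZero R]
    {B : Matrix V V R} (hB : ∀ a b, a ≠ b → ¬G.Adj a b → B a b = 0) {k : ℕ} {u v : Fin k → V}
    (huv : u ≠ v) (h : ¬(G.strongPower k).Adj u v) : B.kroneckerPow k u v = 0 := by
  obtain ⟨i, hne, hadj⟩ : ∃ i, u i ≠ v i ∧ ¬G.Adj (u i) (v i) := by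
    simpa [strongPower, huv] using h
  exact prod_eq_zero (mem_univ i) (hB _ _ hne hadj)

theorem isIndepSet_strongPower_piFinset [DecidableEq V] {S : Finset V} (hS : G.IsIndepSet S)
    (k : ℕ) : (G.strongPower k).IsIndepSet ↑(Fintype.piFinset fun _ : Fin k => S) := by
  intro u hu v hv _ ⟨huv, hadj⟩
  obtain ⟨i, hi⟩ := Function.ne_iff.mp huv
  rw [mem_coe, Fintype.mem_piFinset] at hu hv
  exact (hadj i).elim hi (hS (hu i) (hv i) hi)

variable [DecidableEq V] [DecidableRel G.Adj]

theorem one_sub_inv_smul_adjMatrix_apply (lam : ℝ) (a b : V) :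
    (1 - lam⁻¹ • G.adjMatrix ℝ) a b = if a = b then 1 else if G.Adj a b then -lam⁻¹ else 0 := by
  by_cases hab : a = b
  · subst hab; simp
  · by_cases hadj : G.Adj a b <;> simp [hab, hadj]

theorem one_sub_inv_smul_adjMatrix_apply_self (lam : ℝ) (a : V) :
    (1 - lam⁻¹ • G.adjMatrix ℝ) a a = 1 := by
  rw [one_sub_inv_smul_adjMatrix_apply, if_pos rfl]

theorem one_sub_inv_smul_adjMatrix_apply_of_not_adj (lam : ℝ) {a b : V} (hab : a ≠ b)
    (h : ¬G.Adj a b) : (1 - lam⁻¹ • G.adjMatrix ℝ) a b = 0 := by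
  rw [one_sub_inv_smul_adjMatrix_apply, if_neg hab, if_neg h]

theorem one_le_sum_one_sub_inv_smul_adjMatrix {lam : ℝ} (hneg : lam < 0) {S : Finset V}
    (hS : G.IsIndepSet S) (hcond : ∀ i ∉ S, -lam ≤ #(S.filter fun j => G.Adj i j)) (a : V) :
    1 ≤ ∑ b ∈ S, (1 - lam⁻¹ • G.adjMatrix ℝ) a b := by
  by_cases ha : a ∈ S
  · rw [sum_eq_single_of_mem a ha fun b hb hba => G.one_sub_inv_smul_adjMatrix_apply_of_not_adj lam
      (Ne.symm hba) (hS ha hb (Ne.symm hba)), one_sub_inv_smul_adjMatrix_apply_self]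
  · simp_rw [one_sub_inv_smul_adjMatrix_apply]
    have hne : ∀ b ∈ S, a ≠ b := fun b hb hab => ha (hab ▸ hb)
    rw [sum_congr rfl fun b hb => if_neg (hne b hb), sum_ite, sum_const_zero, add_zero, sum_const,
      nsmul_eq_mul]
    calc (1 : ℝ) = -lam * -lam⁻¹ := by rw [neg_mul_neg, mul_inv_cancel₀ hneg.ne]
      _ ≤ _ := mul_le_mul_of_nonneg_right (hcond a ha) (by simpa using hneg.le)

theorem posSemidef_one_sub_inv_smul_adjMatrix [Fintype V] {lam : ℝ}
    (hlam : lam ∈ lowerBounds (spectrum ℝ (G.adjMatrix ℝ))) (hneg : lam < 0) :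
    (1 - lam⁻¹ • G.adjMatrix ℝ).PosSemidef := by
  have hA : (G.adjMatrix ℝ).IsHermitian := isHermitian_iff_isSymm.2 (G.isSymm_adjMatrix)
  have hrescale : 1 - lam⁻¹ • G.adjMatrix ℝ = (-lam)⁻¹ • (G.adjMatrix ℝ - lam • 1) := by
    rw [smul_sub, smul_smul, inv_neg, neg_mul, inv_mul_cancel₀ hneg.ne, neg_smul, neg_smul,
      one_smul, sub_neg_eq_add, add_comm, ← sub_eq_add_neg]
  rw [hrescale]
  exact (hA.posSemidef_sub_smul_one hlam).smul (inv_nonneg.2 (neg_nonneg.2 hneg.le))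

end

end SimpleGraph

theorem independence_number_strongPower_eq_of_spectral_condition_general
    {V : Type*} [Fintype V] [DecidableEq V]
    (G : SimpleGraph V) [DecidableRel G.Adj]
    (lam : ℝ) (hlam : IsLeast (spectrum ℝ (G.adjMatrix ℝ)) lam) (hneg : lam < 0)
    (S : Finset V)
    (hSindep : ∀ u ∈ S, ∀ v ∈ S, ¬ G.Adj u v)
    (hcond : ∀ i ∉ S, -lam ≤ ((S.filter fun j => G.Adj i j).card : ℝ)) :
    ∀ k : ℕ, 0 < k → ∀ αk : ℕ,
      IsGreatest {c : ℕ | ∃ T : Finset (Fin k → V),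
        (∀ u ∈ T, ∀ v ∈ T, ¬ (G.strongPower k).Adj u v) ∧ T.card = c} αk →
      αk = S.card ^ k := by
  intro k _ αk hαk
  have hS : G.IsIndepSet S := fun u hu v hv _ => hSindep u hu v hv
  have hSk := G.isIndepSet_strongPower_piFinset hS k
  refine le_antisymm ?_
    (hαk.2 ⟨_, fun u hu v hv h => hSk hu hv h.ne h, Fintype.card_piFinset_const S k⟩)
  obtain ⟨T, hT, rfl⟩ := hαk.1
  have hB := G.posSemidef_one_sub_inv_smul_adjMatrix hlam.2 hneg
  rw [← Fintype.card_piFinset_const S k]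
  refine SimpleGraph.card_le_card_of_posSemidef (hB.kroneckerPow k) (fun u => ?_)
    (fun u v huv => G.kroneckerPow_apply_eq_zero_of_not_adj (fun a b hab hadj => ?_) huv) hSk
    (fun u hu v hv _ => hT u hu v hv) fun u => ?_
  · simp only [kroneckerPow_apply, G.one_sub_inv_smul_adjMatrix_apply_self, prod_const_one]
  · exact G.one_sub_inv_smul_adjMatrix_apply_of_not_adj lam hab hadj
  · rw [sum_piFinset_kroneckerPow_apply]
    exact one_le_prod fun i _ => G.one_le_sum_one_sub_inv_smul_adjMatrix hneg hS hcond (u i)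

/-- **A spectral condition determining the Shannon capacity** (Theorem 4.1). Let `G` be a
graph with minimum adjacency eigenvalue `lam < 0`, and let `S` be an independent set such
that every vertex `i ∉ S` has at least `−λ` neighbours in `S`. Then for every `k > 0` the
`k`-th strong power of `G` has independence number `|S|^k`; consequently the Shannon
capacity `Θ(G) = sup_k α(G^k)^{1/k}` equals `|S|`. -/
theorem independence_number_strongPower_eq_of_spectral_condition
    {V : Type*} [Fintype V] [Nonempty V] [DecidableEq V]
    (G : SimpleGraph V) [DecidableRel G.Adj]
    (lam : ℝ) (hlam : IsLeast (spectrum ℝ (G.adjMatrix ℝ)) lam) (hneg : lam < 0)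
    (S : Finset V)
    (hSindep : ∀ u ∈ S, ∀ v ∈ S, ¬ G.Adj u v)
    (hcond : ∀ i ∉ S, -lam ≤ ((S.filter fun j => G.Adj i j).card : ℝ)) :
    ∀ k : ℕ, 0 < k → ∀ αk : ℕ,
      IsGreatest {c : ℕ | ∃ T : Finset (Fin k → V),
        (∀ u ∈ T, ∀ v ∈ T, ¬ (G.strongPower k).Adj u v) ∧ T.card = c} αk →
      αk = S.card ^ k :=
  independence_number_strongPower_eq_of_spectral_condition_general G lam hlam hneg S hSindep hcond
end

section
/- Let G be a finite simple graph on a nonempty finite vertex set V with minimum adjacency eigenvalue λ₀, and let p : V → ℕ with p(v) ≥ 1 for all v; write P = max_v p(v) and q = min_v p(v), and assume λ₀ + q − P/q ≥ 0. Let H = G(p) be the graph obtained from G by attaching p(v) new pendant vertices to each vertex v. Then the minimum eigenvalue λ of the adjacency matrix of H satisfies −λ ≤ q. -/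
/-- The pendant extension `G(p)` of a graph `G`: to each vertex `v` of `G` we attach
`p v` new pendant vertices. Its vertex set is `V ⊕ Σ v, Fin (p v)`; two original vertices
are adjacent iff they are adjacent in `G`, a pendant vertex `(v, j)` is adjacent exactly
to `v`, and pendant vertices are pairwise nonadjacent. -/
def SimpleGraph.pendantExtension {V : Type*} (G : SimpleGraph V) (p : V → ℕ) :
    SimpleGraph (V ⊕ Σ v : V, Fin (p v)) where
  Adj u w := match u, w with
    | Sum.inl a, Sum.inl b => G.Adj a b
    | Sum.inl a, Sum.inr ⟨b, _⟩ => a = b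
    | Sum.inr ⟨a, _⟩, Sum.inl b => a = b
    | Sum.inr _, Sum.inr _ => False
  symm := ⟨by
    rintro (a | ⟨a, j⟩) (b | ⟨b, i⟩) h
    · exact G.adj_symm h
    · exact h.symm
    · exact h.symm
    · exact h.elim⟩
  loopless := ⟨by
    rintro (a | ⟨a, j⟩) h
    · exact G.irrefl h
    · exact h.elim⟩

instance {V : Type*} [DecidableEq V] (G : SimpleGraph V) [DecidableRel G.Adj] (p : V → ℕ) :
    DecidableRel (G.pendantExtension p).Adj := fun u w =>
  match u, w with
  | Sum.inl a, Sum.inl b => inferInstanceAs (Decidable (G.Adj a b))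
  | Sum.inl a, Sum.inr ⟨b, _⟩ => inferInstanceAs (Decidable (a = b))
  | Sum.inr ⟨a, _⟩, Sum.inl b => inferInstanceAs (Decidable (a = b))
  | Sum.inr _, Sum.inr _ => inferInstanceAs (Decidable False)

/-!
Write a vector on `G(p)` as a vertex part `y` and pendant parts `z v j`. Then
`xᵀ A_H x = yᵀ A_G y + 2 ∑ y_v z_{vj}`, and completing the square, `2 a b + q b² ≥ -a²/q`, each
vertex `v` loses at most `p v / q ≤ P / q` times `y_v²` to its pendants. Hence
`xᵀ A_H x + q ‖x‖² ≥ (λ₀ + q - P / q) ‖y‖² ≥ 0`, i.e. `A_H + q` is positive semidefinite.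
-/

open Matrix

theorem neg_sq_div_le_two_mul_add_mul_sq {K : Type*} [Field K] [LinearOrder K]
    [IsStrictOrderedRing K] {q : K} (hq : 0 < q) (a b : K) :
    -(a ^ 2 / q) ≤ 2 * a * b + q * b ^ 2 :=
  calc -(a ^ 2 / q) = 2 * a * b + q * b ^ 2 - (a + q * b) ^ 2 / q := by field_simp; ring
    _ ≤ 2 * a * b + q * b ^ 2 := sub_le_self _ (by positivity)

theorem Matrix.IsHermitian.forall_le_of_mem_spectrum_iff {n : Type*} [Fintype n] [DecidableEq n]
    {M : Matrix n n ℝ} (hM : M.IsHermitian) (l : ℝ) :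
    (∀ a ∈ spectrum ℝ M, l ≤ a) ↔ ∀ x, l * (x ⬝ᵥ x) ≤ x ⬝ᵥ M *ᵥ x := by
  have hMl : (M - algebraMap ℝ _ l).IsHermitian :=
    hM.sub (by simp [Algebra.algebraMap_eq_smul_one])
  calc (∀ a ∈ spectrum ℝ M, l ≤ a)
      ↔ spectrum ℝ (M - algebraMap ℝ _ l) ⊆ {a | 0 ≤ a} := by
        simp [← spectrum.sub_singleton_eq, Set.subset_def]
    _ ↔ (M - algebraMap ℝ _ l).PosSemidef := by
        rw [posSemidef_iff_isHermitian_and_spectrum_nonneg, and_iff_right hMl]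
    _ ↔ ∀ x, l * (x ⬝ᵥ x) ≤ x ⬝ᵥ M *ᵥ x := by
        rw [posSemidef_iff_dotProduct_mulVec, and_iff_right hMl]
        simp [Algebra.algebraMap_eq_smul_one, sub_mulVec, dotProduct_sub, smul_mulVec]

namespace SimpleGraph

section Adj

variable {V : Type*} (G : SimpleGraph V) (p : V → ℕ)

@[simp]
theorem pendantExtension_adj_inl_inl {a b : V} :
    (G.pendantExtension p).Adj (.inl a) (.inl b) ↔ G.Adj a b := .rfl

@[simp]
theorem pendantExtension_adj_inl_inr {a b : V} {j : Fin (p b)} :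
    (G.pendantExtension p).Adj (.inl a) (.inr ⟨b, j⟩) ↔ a = b := .rfl

@[simp]
theorem pendantExtension_adj_inr_inl {a b : V} {j : Fin (p a)} :
    (G.pendantExtension p).Adj (.inr ⟨a, j⟩) (.inl b) ↔ a = b := .rfl

@[simp]
theorem not_pendantExtension_adj_inr_inr {a b : V} {i : Fin (p a)} {j : Fin (p b)} :
    ¬(G.pendantExtension p).Adj (.inr ⟨a, i⟩) (.inr ⟨b, j⟩) := id

end Adj

variable {V R : Type*} [Fintype V] [DecidableEq V] (G : SimpleGraph V) [DecidableRel G.Adj]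
  (p : V → ℕ)

section QuadraticForm

variable [CommSemiring R] (x : V ⊕ (Σ v, Fin (p v)) → R)

theorem adjMatrix_pendantExtension_mulVec_inl (v : V) :
    ((G.pendantExtension p).adjMatrix R *ᵥ x) (.inl v) =
      (G.adjMatrix R *ᵥ (x ∘ .inl)) v + ∑ j : Fin (p v), x (.inr ⟨v, j⟩) := by
  simp [mulVec, dotProduct, Fintype.sum_sum_type, Fintype.sum_sigma, adjMatrix_apply]

theorem adjMatrix_pendantExtension_mulVec_inr (v : V) (j : Fin (p v)) :
    ((G.pendantExtension p).adjMatrix R *ᵥ x) (.inr ⟨v, j⟩) = x (.inl v) := by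
  simp [mulVec, dotProduct, Fintype.sum_sum_type, Fintype.sum_sigma, adjMatrix_apply]

theorem dotProduct_adjMatrix_pendantExtension_mulVec :
    x ⬝ᵥ (G.pendantExtension p).adjMatrix R *ᵥ x =
      (x ∘ .inl) ⬝ᵥ G.adjMatrix R *ᵥ (x ∘ .inl) +
        ∑ v, ∑ j : Fin (p v), 2 * x (.inl v) * x (.inr ⟨v, j⟩) := by
  simp only [dotProduct, Fintype.sum_sum_type, Fintype.sum_sigma,
    adjMatrix_pendantExtension_mulVec_inl, adjMatrix_pendantExtension_mulVec_inr, mul_add,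
    Finset.sum_add_distrib, Finset.mul_sum, Function.comp_apply]
  rw [add_assoc, ← Finset.sum_add_distrib]
  congr 2 with v
  rw [← Finset.sum_add_distrib]
  congr 1 with j
  ring

end QuadraticForm

theorem neg_mul_dotProduct_le_dotProduct_adjMatrix_pendantExtension_mulVec
    {lam0 P q : ℝ} (hq : 0 < q) (hP : ∀ v, (p v : ℝ) ≤ P)
    (hG : ∀ y, lam0 * (y ⬝ᵥ y) ≤ y ⬝ᵥ G.adjMatrix ℝ *ᵥ y) (hcond : 0 ≤ lam0 + q - P / q)
    (x : V ⊕ (Σ v, Fin (p v)) → ℝ) :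
    -q * (x ⬝ᵥ x) ≤ x ⬝ᵥ (G.pendantExtension p).adjMatrix ℝ *ᵥ x := by
  have hvertex (v : V) : -(P / q) * x (.inl v) ^ 2 ≤
      ∑ j : Fin (p v), (2 * x (.inl v) * x (.inr ⟨v, j⟩) + q * x (.inr ⟨v, j⟩) ^ 2) :=
    calc -(P / q) * x (.inl v) ^ 2 ≤ -(p v / q) * x (.inl v) ^ 2 := by gcongr; exact hP v
      _ = p v • -(x (.inl v) ^ 2 / q) := by rw [nsmul_eq_mul]; ring
      _ ≤ _ := by
          simpa using Finset.card_nsmul_le_sum Finset.univ _ _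
            fun j _ => neg_sq_div_le_two_mul_add_mul_sq hq (x (.inl v)) (x (.inr ⟨v, j⟩))
  have hpendant : -(P / q) * ((x ∘ .inl) ⬝ᵥ (x ∘ .inl)) ≤
      ∑ v, ∑ j : Fin (p v), 2 * x (.inl v) * x (.inr ⟨v, j⟩) +
        q * ∑ v, ∑ j : Fin (p v), x (.inr ⟨v, j⟩) ^ 2 := by
    simpa only [dotProduct, Finset.mul_sum, Finset.sum_add_distrib, Function.comp_apply, ← sq]
      using Finset.sum_le_sum fun v _ => hvertex v
  have hsplit : x ⬝ᵥ x = (x ∘ .inl) ⬝ᵥ (x ∘ .inl) + ∑ v, ∑ j : Fin (p v), x (.inr ⟨v, j⟩) ^ 2 := by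
    simp [dotProduct, Fintype.sum_sum_type, Fintype.sum_sigma, sq]
  have hvertices : 0 ≤ (lam0 + q - P / q) * ((x ∘ .inl) ⬝ᵥ (x ∘ .inl)) :=
    mul_nonneg hcond (Finset.sum_nonneg fun v _ => mul_self_nonneg _)
  rw [dotProduct_adjMatrix_pendantExtension_mulVec, hsplit]
  linarith [hG (x ∘ .inl)]

end SimpleGraph

theorem min_eigenvalue_pendantExtension_general
    {V : Type*} [Fintype V] [DecidableEq V]
    (G : SimpleGraph V) [DecidableRel G.Adj]
    (p : V → ℕ) (hp : ∀ v, 1 ≤ p v)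
    (P q : ℕ) (hP : IsGreatest (Set.range p) P) (hq : IsLeast (Set.range p) q)
    (lam0 : ℝ) (hlam0 : IsLeast (spectrum ℝ (G.adjMatrix ℝ)) lam0)
    (hcond : 0 ≤ lam0 + (q : ℝ) - (P : ℝ) / (q : ℝ))
    (lam : ℝ)
    (hlam : IsLeast (spectrum ℝ ((G.pendantExtension p).adjMatrix ℝ)) lam) :
    -lam ≤ (q : ℝ) := by
  have hq_pos : (0 : ℝ) < q := by
    obtain ⟨v, hv⟩ := hq.1
    exact_mod_cast hv ▸ hp v
  have hpP (v : V) : (p v : ℝ) ≤ P := by exact_mod_cast hP.2 ⟨v, rfl⟩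
  have hG := ((G.isHermitian_adjMatrix ℝ).forall_le_of_mem_spectrum_iff lam0).mp hlam0.2
  have hH := ((G.pendantExtension p).isHermitian_adjMatrix ℝ).forall_le_of_mem_spectrum_iff (-q)
    |>.mpr (G.neg_mul_dotProduct_le_dotProduct_adjMatrix_pendantExtension_mulVec p hq_pos hpP hG
      hcond)
  exact neg_le.mpr (hH lam hlam.1)

/-- **Example 4.1** (spectral part). Let `G` be a graph with minimum adjacency eigenvalue
`λ₀`, let `p : V → ℕ` with `p v ≥ 1` for every `v`, let `P` and `q` be the maximum and
minimum of `p`, and assume `λ₀ + q − P/q ≥ 0`. Then the minimum adjacency eigenvalue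
`lam` of the pendant extension `H = G(p)` satisfies `−lam ≤ q`. -/
theorem min_eigenvalue_pendantExtension
    {V : Type*} [Fintype V] [Nonempty V] [DecidableEq V]
    (G : SimpleGraph V) [DecidableRel G.Adj]
    (p : V → ℕ) (hp : ∀ v, 1 ≤ p v)
    (P q : ℕ) (hP : IsGreatest (Set.range p) P) (hq : IsLeast (Set.range p) q)
    (lam0 : ℝ) (hlam0 : IsLeast (spectrum ℝ (G.adjMatrix ℝ)) lam0)
    (hcond : 0 ≤ lam0 + (q : ℝ) - (P : ℝ) / (q : ℝ))
    (lam : ℝ)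
    (hlam : IsLeast (spectrum ℝ ((G.pendantExtension p).adjMatrix ℝ)) lam) :
    -lam ≤ (q : ℝ) :=
  min_eigenvalue_pendantExtension_general G p hp P q hP hq lam0 hlam0 hcond lam hlam
end

section
/- For all integers r₁ ≥ 1 and n₂ ≥ 1 there exists N such that the following holds for every n₁ ≥ N, every integer r₂ with 0 ≤ r₂ ≤ n₂ − 1, every r₁-regular simple graph G₁ on n₁ vertices, and every r₂-regular simple graph G₂ on n₂ vertices. Let G = G₁ ∨ G₂ be the join (the graph on the disjoint union of the vertex sets containing all edges of G₁ and G₂ and all edges between a vertex of G₁ and a vertex of G₂), let n = n₁ + n₂, let δ and d̄ be the minimum and average degree of G, let λ_max and λ_min be the maximum and minimum eigenvalues of the adjacency matrix of G, and let μ be the maximum eigenvalue of the Laplacian matrix of G. Then β₁ < β₂ < β₃, where β₁ = −λ_min·n·(d̄ − λ_min)/(δ − λ_min)², β₂ = n·(−λ_max·λ_min)/(δ² − λ_max·λ_min), and β₃ = n·(μ − δ)/μ. -/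
/-- The join `G₁ ∨ G₂` of two simple graphs: the graph on the disjoint union of the
vertex sets containing all edges of `G₁`, all edges of `G₂`, and all edges between a
vertex of `G₁` and a vertex of `G₂`. -/
def SimpleGraph.join {α β : Type*} (G₁ : SimpleGraph α) (G₂ : SimpleGraph β) :
    SimpleGraph (α ⊕ β) where
  Adj u w := match u, w with
    | Sum.inl a, Sum.inl b => G₁.Adj a b
    | Sum.inr a, Sum.inr b => G₂.Adj a b
    | Sum.inl _, Sum.inr _ => True
    | Sum.inr _, Sum.inl _ => True
  symm := ⟨by
    rintro (a | a) (b | b) h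
    · exact G₁.adj_symm h
    · exact trivial
    · exact trivial
    · exact G₂.adj_symm h⟩
  loopless := ⟨by
    rintro (a | a) h
    · exact G₁.ne_of_adj h rfl
    · exact G₂.ne_of_adj h rfl⟩

instance {α β : Type*} (G₁ : SimpleGraph α) (G₂ : SimpleGraph β)
    [DecidableRel G₁.Adj] [DecidableRel G₂.Adj] :
    DecidableRel (G₁.join G₂).Adj := fun u w =>
  match u, w with
  | Sum.inl a, Sum.inl b => inferInstanceAs (Decidable (G₁.Adj a b))
  | Sum.inr a, Sum.inr b => inferInstanceAs (Decidable (G₂.Adj a b))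
  | Sum.inl _, Sum.inr _ => inferInstanceAs (Decidable True)
  | Sum.inr _, Sum.inl _ => inferInstanceAs (Decidable True)

/-!
Once `n₁` is large the extremal adjacency eigenvalues of `G₁ ∨ G₂` are explicit. For an
eigenvector, either its sums over both sides vanish, and then it restricts to an eigenvector of
`G₁` or `G₂` (eigenvalue of absolute value at most `max r₁ r₂`, by Gershgorin), or these sums
satisfy the 2×2 quotient equations, forcing `(λ - r₁)(λ - r₂) = n₁ n₂`. Both roots of this
quadratic are eigenvalues and lie outside `[-max r₁ r₂, max r₁ r₂]`, so they are `λ_max` and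
`λ_min`; hence `λ_max + λ_min = r₁ + r₂` and `λ_max λ_min = r₁ r₂ - n₁ n₂`. Moreover
`δ = r₁ + n₂`, and `n` is a Laplacian eigenvalue, so `μ ≥ n`. With these values `β₂ < β₃`
reduces to `r₁ (n₁ - r₁ - n₂ + r₂) > 0`, and `β₁ < β₂` to
`δ² (d̄ - λ_max - λ_min) < -λ_max λ_min (2δ - d̄)`, whose two sides grow like `n₁` and `n₁²`.
-/

open Matrix Finset

theorem exists_sub_mul_sub_eq_of_nonneg (r₁ r₂ : ℝ) {p : ℝ} (hp : 0 ≤ p) :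
    ∃ x y : ℝ, (x - r₁) * (x - r₂) = p ∧ (y - r₁) * (y - r₂) = p ∧
      y ≤ (r₁ + r₂) / 2 ∧ (r₁ + r₂) / 2 ≤ x := by
  have hE := Real.sq_sqrt (by positivity : 0 ≤ (r₁ - r₂) ^ 2 + 4 * p)
  have hE0 := Real.sqrt_nonneg ((r₁ - r₂) ^ 2 + 4 * p)
  refine ⟨(r₁ + r₂ + √((r₁ - r₂) ^ 2 + 4 * p)) / 2, (r₁ + r₂ - √((r₁ - r₂) ^ 2 + 4 * p)) / 2,
    by linear_combination hE / 4, by linear_combination hE / 4, by linarith, by linarith⟩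

theorem lt_abs_of_sub_mul_sub_eq {r₁ r₂ ρ p x : ℝ} (hr₁ : 0 ≤ r₁) (hr₂ : 0 ≤ r₂)
    (hρ₁ : r₁ ≤ ρ) (hρ₂ : r₂ ≤ ρ) (hp : 4 * ρ ^ 2 < p) (hx : (x - r₁) * (x - r₂) = p) :
    ρ < |x| := by
  by_contra! h
  obtain ⟨hlo, hhi⟩ := abs_le.mp h
  have h₁ : |x - r₁| ≤ 2 * ρ := abs_le.mpr ⟨by linarith, by linarith⟩
  have h₂ : |x - r₂| ≤ 2 * ρ := abs_le.mpr ⟨by linarith, by linarith⟩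
  have : p ≤ 4 * ρ ^ 2 := calc
    p ≤ |x - r₁| * |x - r₂| := by rw [← hx, ← abs_mul]; exact le_abs_self _
    _ ≤ (2 * ρ) * (2 * ρ) := mul_le_mul h₁ h₂ (abs_nonneg _) (by linarith)
    _ = 4 * ρ ^ 2 := by ring
  linarith

theorem add_eq_and_mul_eq_of_sub_mul_sub_eq {r₁ r₂ p a b : ℝ} (ha : (a - r₁) * (a - r₂) = p)
    (hb : (b - r₁) * (b - r₂) = p) (hab : a ≠ b) : a + b = r₁ + r₂ ∧ a * b = r₁ * r₂ - p := by
  have : (a - b) * (a + b - r₁ - r₂) = 0 := by linear_combination ha - hb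
  have hsum : a + b = r₁ + r₂ := by
    linarith [(mul_eq_zero.mp this).resolve_left (sub_ne_zero.mpr hab)]
  exact ⟨hsum, by linear_combination a * hsum - ha⟩

theorem Matrix.mem_spectrum_iff_exists_mulVec_eq_smul {K n : Type*} [Field K] [Fintype n]
    [DecidableEq n] {A : Matrix n n K} {μ : K} :
    μ ∈ spectrum K A ↔ ∃ v ≠ 0, A *ᵥ v = μ • v := by
  simp only [← Matrix.spectrum_toLin', ← Module.End.hasEigenvalue_iff_mem_spectrum,
    Module.End.hasEigenvalue_iff, Submodule.ne_bot_iff, Module.End.mem_eigenspace_iff,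
    Matrix.toLin'_apply]
  exact ⟨fun ⟨v, hv, h0⟩ => ⟨v, h0, hv⟩, fun ⟨v, h0, hv⟩ => ⟨v, hv, h0⟩⟩

@[simp] theorem Matrix.of_one_mulVec {m n R : Type*} [Fintype n] [NonAssocSemiring R]
    (v : n → R) : (of fun (_ : m) (_ : n) => (1 : R)) *ᵥ v = fun _ => ∑ j, v j := by
  ext; simp [mulVec, dotProduct]

namespace SimpleGraph

theorem abs_le_of_mem_spectrum_adjMatrix {V : Type*} [Fintype V] [DecidableEq V]
    (G : SimpleGraph V) [DecidableRel G.Adj] {r : ℕ} (hG : ∀ v, G.degree v ≤ r) {μ : ℝ}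
    (hμ : μ ∈ spectrum ℝ (G.adjMatrix ℝ)) : |μ| ≤ r := by
  rw [← Matrix.spectrum_toLin', ← Module.End.hasEigenvalue_iff_mem_spectrum] at hμ
  obtain ⟨k, hk⟩ := eigenvalue_mem_ball hμ
  rw [Metric.mem_closedBall, adjMatrix_apply, if_neg (G.loopless.irrefl k), dist_zero_right,
    Real.norm_eq_abs] at hk
  calc |μ| ≤ ∑ j ∈ univ.erase k, ‖G.adjMatrix ℝ k j‖ := hk
    _ ≤ ∑ j, G.adjMatrix ℝ k j := by
      refine (sum_le_sum_of_subset_of_nonneg (erase_subset k univ) fun _ _ _ => norm_nonneg _).trans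
        (sum_le_sum fun j _ => ?_)
      rw [adjMatrix_apply]; split_ifs <;> simp
    _ = G.degree k := by simp [degree_eq_sum_if_adj]
    _ ≤ r := by exact_mod_cast hG k

theorem sum_adjMatrix_mulVec_of_regular {V : Type*} [Fintype V] {G : SimpleGraph V}
    [DecidableRel G.Adj] {r : ℕ} (hG : G.IsRegularOfDegree r) (x : V → ℝ) :
    ∑ v, (G.adjMatrix ℝ *ᵥ x) v = r * ∑ v, x v := by
  calc ∑ v, (G.adjMatrix ℝ *ᵥ x) v = (fun _ => 1) ⬝ᵥ (G.adjMatrix ℝ *ᵥ x) := by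
        simp [dotProduct]
    _ = (G.adjMatrix ℝ *ᵥ Function.const V 1) ⬝ᵥ x := by
        rw [dotProduct_mulVec, ← mulVec_transpose, transpose_adjMatrix]; rfl
    _ = r * ∑ v, x v := by
        simp [dotProduct, hG _, mul_sum]

section Join

variable {α β : Type*} (G₁ : SimpleGraph α) (G₂ : SimpleGraph β)

@[simp] theorem join_adj_inl_inl {a b : α} : (G₁.join G₂).Adj (.inl a) (.inl b) ↔ G₁.Adj a b :=
  Iff.rfl

@[simp] theorem join_adj_inr_inr {a b : β} : (G₁.join G₂).Adj (.inr a) (.inr b) ↔ G₂.Adj a b :=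
  Iff.rfl

@[simp] theorem join_adj_inl_inr {a : α} {b : β} : (G₁.join G₂).Adj (.inl a) (.inr b) :=
  trivial

@[simp] theorem join_adj_inr_inl {a : β} {b : α} : (G₁.join G₂).Adj (.inr a) (.inl b) :=
  trivial

variable [DecidableRel G₁.Adj] [DecidableRel G₂.Adj]

theorem adjMatrix_join (R : Type*) [Zero R] [One R] :
    (G₁.join G₂).adjMatrix R =
      fromBlocks (G₁.adjMatrix R) (of fun _ _ => 1) (of fun _ _ => 1) (G₂.adjMatrix R) := by
  ext (a | a) (b | b) <;> simp

variable [Fintype α] [Fintype β]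

theorem degree_join_inl (a : α) : (G₁.join G₂).degree (.inl a) = G₁.degree a + Fintype.card β := by
  have : (G₁.join G₂).neighborFinset (.inl a) = (G₁.neighborFinset a).disjSum univ := by
    ext (b | b) <;> simp
  rw [← card_neighborFinset_eq_degree, this, card_disjSum, card_univ, card_neighborFinset_eq_degree]

theorem degree_join_inr (b : β) : (G₁.join G₂).degree (.inr b) = Fintype.card α + G₂.degree b := by
  have : (G₁.join G₂).neighborFinset (.inr b) = univ.disjSum (G₂.neighborFinset b) := by
    ext (a | a) <;> simp
  rw [← card_neighborFinset_eq_degree, this, card_disjSum, card_univ, card_neighborFinset_eq_degree]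

variable {G₁ G₂} {r₁ r₂ : ℕ}

theorem sum_degree_join (h₁ : G₁.IsRegularOfDegree r₁) (h₂ : G₂.IsRegularOfDegree r₂) :
    ∑ v, (G₁.join G₂).degree v =
      Fintype.card α * (r₁ + Fintype.card β) + Fintype.card β * (Fintype.card α + r₂) := by
  simp [Fintype.sum_sum_type, degree_join_inl, degree_join_inr, h₁ _, h₂ _]

theorem isLeast_degree_join [Nonempty α] [Nonempty β] (h₁ : G₁.IsRegularOfDegree r₁)
    (h₂ : G₂.IsRegularOfDegree r₂) :
    IsLeast (Set.range fun v => (G₁.join G₂).degree v)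
      (min (r₁ + Fintype.card β) (Fintype.card α + r₂)) := by
  refine ⟨?_, ?_⟩
  · rcases min_choice (r₁ + Fintype.card β) (Fintype.card α + r₂) with h | h <;> rw [h]
    · exact ⟨.inl (Classical.arbitrary α), by simp [degree_join_inl, h₁ _]⟩
    · exact ⟨.inr (Classical.arbitrary β), by simp [degree_join_inr, h₂ _]⟩
  · rintro _ ⟨a | b, rfl⟩
    · simp [degree_join_inl, h₁ _]
    · simp [degree_join_inr, h₂ _]

variable [DecidableEq α] [DecidableEq β]

theorem mem_spectrum_adjMatrix_join (h₁ : G₁.IsRegularOfDegree r₁)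
    (h₂ : G₂.IsRegularOfDegree r₂) {μ : ℝ} (hμ : μ ∈ spectrum ℝ ((G₁.join G₂).adjMatrix ℝ)) :
    (μ - r₁) * (μ - r₂) = Fintype.card α * Fintype.card β ∨
      μ ∈ spectrum ℝ (G₁.adjMatrix ℝ) ∨ μ ∈ spectrum ℝ (G₂.adjMatrix ℝ) := by
  obtain ⟨v, hv0, hv⟩ := Matrix.mem_spectrum_iff_exists_mulVec_eq_smul.mp hμ
  rw [adjMatrix_join, fromBlocks_mulVec, funext_iff, Sum.forall] at hv
  obtain ⟨hx, hy⟩ := hv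
  simp only [Sum.elim_inl, Sum.elim_inr, Pi.add_apply, Matrix.of_one_mulVec, Pi.smul_apply,
    smul_eq_mul, Function.comp_def] at hx hy
  set s := ∑ a, v (.inl a)
  set t := ∑ b, v (.inr b)
  have hs : μ * s = r₁ * s + Fintype.card α * t := by
    simp only [s, mul_sum, ← hx, sum_add_distrib, sum_adjMatrix_mulVec_of_regular h₁, sum_const,
      card_univ, nsmul_eq_mul]
  have ht : μ * t = Fintype.card β * s + r₂ * t := by
    simp only [t, mul_sum, ← hy, sum_add_distrib, sum_adjMatrix_mulVec_of_regular h₂, sum_const,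
      card_univ, nsmul_eq_mul]
  by_cases hst : s = 0 ∧ t = 0
  · right
    by_cases hx0 : (fun a => v (.inl a)) = 0
    · refine .inr (Matrix.mem_spectrum_iff_exists_mulVec_eq_smul.mpr
        ⟨fun b => v (.inr b), fun hy0 => hv0 ?_, funext fun b => by simpa [hst.1] using hy b⟩)
      ext (a | b)
      exacts [congrFun hx0 a, congrFun hy0 b]
    · exact .inl (Matrix.mem_spectrum_iff_exists_mulVec_eq_smul.mpr
        ⟨_, hx0, funext fun a => by simpa [hst.2] using hx a⟩)
  · left
    rcases not_and_or.mp hst with h | h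
    · exact mul_right_cancel₀ h (by linear_combination (μ - r₂) * hs + Fintype.card α * ht)
    · exact mul_right_cancel₀ h (by linear_combination (μ - r₁) * ht + Fintype.card β * hs)

theorem mem_spectrum_adjMatrix_join_of_eq [Nonempty α] [Nonempty β]
    (h₁ : G₁.IsRegularOfDegree r₁) (h₂ : G₂.IsRegularOfDegree r₂) {μ : ℝ}
    (hμ : (μ - r₁) * (μ - r₂) = Fintype.card α * Fintype.card β) :
    μ ∈ spectrum ℝ ((G₁.join G₂).adjMatrix ℝ) := by
  refine Matrix.mem_spectrum_iff_exists_mulVec_eq_smul.mpr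
    ⟨Sum.elim (fun _ => (Fintype.card β : ℝ)) (fun _ => μ - r₁), fun h => ?_, ?_⟩
  · have := congrFun h (.inl (Classical.arbitrary α))
    simp at this
  · rw [adjMatrix_join, fromBlocks_mulVec]
    ext (a | b)
    · simp [h₁ a]
      ring
    · simp [h₂ b]
      linear_combination -hμ

theorem card_add_card_mem_spectrum_lapMatrix_join [Nonempty α] [Nonempty β] :
    (Fintype.card α + Fintype.card β : ℝ) ∈ spectrum ℝ ((G₁.join G₂).lapMatrix ℝ) := by
  refine Matrix.mem_spectrum_iff_exists_mulVec_eq_smul.mpr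
    ⟨Sum.elim (fun _ => (Fintype.card β : ℝ)) (fun _ => -(Fintype.card α : ℝ)), fun h => ?_, ?_⟩
  · have := congrFun h (.inl (Classical.arbitrary α))
    simp at this
  · rw [lapMatrix, sub_mulVec, adjMatrix_join, fromBlocks_mulVec]
    ext (a | b)
    · simp [degMatrix_mulVec_apply, degree_join_inl]
      ring
    · simp [degMatrix_mulVec_apply, degree_join_inr]
      ring

theorem extremal_eigenvalues_adjMatrix_join [Nonempty α] [Nonempty β]
    (h₁ : G₁.IsRegularOfDegree r₁) (h₂ : G₂.IsRegularOfDegree r₂)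
    (hρ : 4 * max r₁ r₂ ^ 2 < Fintype.card α * Fintype.card β) {lmax lmin : ℝ}
    (hmax : IsGreatest (spectrum ℝ ((G₁.join G₂).adjMatrix ℝ)) lmax)
    (hmin : IsLeast (spectrum ℝ ((G₁.join G₂).adjMatrix ℝ)) lmin) :
    (lmax - r₁) * (lmax - r₂) = Fintype.card α * Fintype.card β ∧
      (lmin - r₁) * (lmin - r₂) = Fintype.card α * Fintype.card β ∧ lmin < lmax := by
  have hρ' : 4 * (max r₁ r₂ : ℝ) ^ 2 < Fintype.card α * Fintype.card β := by exact_mod_cast hρ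
  set ρ : ℝ := max r₁ r₂
  have hρ₁ : (r₁ : ℝ) ≤ ρ := le_max_left _ _
  have hρ₂ : (r₂ : ℝ) ≤ ρ := le_max_right _ _
  have hfar : ∀ x : ℝ, (x - r₁) * (x - r₂) = Fintype.card α * Fintype.card β → ρ < |x| :=
    fun x => lt_abs_of_sub_mul_sub_eq (Nat.cast_nonneg _) (Nat.cast_nonneg _) hρ₁ hρ₂ hρ'
  have hroot : ∀ μ ∈ spectrum ℝ ((G₁.join G₂).adjMatrix ℝ), ρ < |μ| →
      (μ - r₁) * (μ - r₂) = Fintype.card α * Fintype.card β := by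
    intro μ hμ hμρ
    rcases mem_spectrum_adjMatrix_join h₁ h₂ hμ with h | h | h
    · exact h
    · linarith [abs_le_of_mem_spectrum_adjMatrix G₁ (fun v => (h₁ v).le) h]
    · linarith [abs_le_of_mem_spectrum_adjMatrix G₂ (fun v => (h₂ v).le) h]
  obtain ⟨x, y, hx, hy, hy₂, hx₂⟩ := exists_sub_mul_sub_eq_of_nonneg r₁ r₂
    (by positivity : (0 : ℝ) ≤ Fintype.card α * Fintype.card β)
  have hxρ : ρ < x := (hfar x hx).trans_eq (abs_of_nonneg (le_trans (by positivity) hx₂))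
  have hyρ : y < -ρ := by
    rcases lt_abs.mp (hfar y hy) with h | h <;> linarith
  have hlmax : ρ < lmax := hxρ.trans_le (hmax.2 (mem_spectrum_adjMatrix_join_of_eq h₁ h₂ hx))
  have hlmin : lmin < -ρ := (hmin.2 (mem_spectrum_adjMatrix_join_of_eq h₁ h₂ hy)).trans_lt hyρ
  refine ⟨hroot _ hmax.1 (hlmax.trans_le (le_abs_self _)), hroot _ hmin.1 ?_, by linarith⟩
  exact lt_of_lt_of_le (by linarith) (neg_le_abs lmin)

end Join

end SimpleGraph

theorem beta₁_lt_beta₂ {n D d a b : ℝ} (hn : 0 < n) (hD : 0 ≤ D) (hb : b < 0) (hab : a * b < 0)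
    (hkey : D ^ 2 * (d - a - b) < -(a * b) * (2 * D - d)) :
    -b * n * (d - b) / (D - b) ^ 2 < n * (-(a * b)) / (D ^ 2 - a * b) := by
  rw [div_lt_div_iff₀ (by nlinarith) (by nlinarith)]
  have hpos : 0 < (n * -b) * (-(a * b) * (2 * D - d) - D ^ 2 * (d - a - b)) :=
    mul_pos (mul_pos hn (neg_pos.mpr hb)) (sub_pos.mpr hkey)
  linear_combination hpos

theorem beta₂_lt_beta₃ {n D μ a b : ℝ} (hD : 0 < D) (hμ : n ≤ μ) (hab : a * b ≤ 0)
    (hkey : -(a * b) < D * (n - D)) :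
    n * (-(a * b)) / (D ^ 2 - a * b) < n * (μ - D) / μ := by
  have hn : D < n := by nlinarith
  calc n * (-(a * b)) / (D ^ 2 - a * b) < n - D := by
        rw [div_lt_iff₀ (by nlinarith)]
        nlinarith
    _ ≤ n * (μ - D) / μ := by
        rw [le_div_iff₀ (by linarith)]
        nlinarith

theorem join_beta₁_lt_beta₂_key {n₁ n₂ r₁ r₂ d : ℝ} (hr₁ : 1 ≤ r₁) (hr₂ : 0 ≤ r₂) (hn₂ : r₂ < n₂)
    (hn₁ : 2 * (r₁ + n₂) ^ 2 + r₁ < n₁)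
    (hd : d * (n₁ + n₂) = n₁ * (r₁ + n₂) + n₂ * (n₁ + r₂)) :
    (r₁ + n₂) ^ 2 * (d - (r₁ + r₂)) < (n₁ * n₂ - r₁ * r₂) * (2 * (r₁ + n₂) - d) := by
  have hn₂0 : 0 < n₂ := by linarith
  have hn₁0 : 0 < n₁ := by nlinarith
  have hgap : 0 ≤ n₁ * n₂ - r₁ * r₂ := by nlinarith
  refine lt_of_mul_lt_mul_right ?_ (by linarith : 0 ≤ n₁ + n₂)
  calc (r₁ + n₂) ^ 2 * (d - (r₁ + r₂)) * (n₁ + n₂)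
      = (r₁ + n₂) ^ 2 * (n₁ * (2 * n₂ - r₂) - r₁ * n₂) := by linear_combination (r₁ + n₂) ^ 2 * hd
    _ ≤ 2 * (r₁ + n₂) ^ 2 * (n₁ * n₂) := by
        nlinarith [mul_nonneg (sq_nonneg (r₁ + n₂)) (by positivity : 0 ≤ n₁ * r₂ + r₁ * n₂)]
    _ < (n₁ - r₁) * (n₁ * n₂) := by gcongr; linarith
    _ ≤ (n₁ * n₂ - r₁ * r₂) * r₁ * n₁ := by
        have : (n₁ - r₁) * n₂ ≤ (n₁ * n₂ - r₁ * r₂) * r₁ := by nlinarith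
        nlinarith [mul_le_mul_of_nonneg_right this hn₁0.le]
    _ ≤ (n₁ * n₂ - r₁ * r₂) * (2 * (r₁ + n₂) - d) * (n₁ + n₂) := by
        nlinarith [mul_nonneg hgap (by nlinarith : 0 ≤ 2 * r₁ * n₂ + n₂ * (2 * n₂ - r₂))]

theorem ratio_bounds_of_join_spectrum {n₁ n₂ r₁ r₂ lmax lmin μ dbar : ℝ} (hr₁ : 1 ≤ r₁)
    (hr₂ : 0 ≤ r₂) (hn₂ : r₂ < n₂) (hn₁ : 4 * (r₁ + n₂) ^ 2 + 1 ≤ n₁)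
    (hsum : lmax + lmin = r₁ + r₂) (hprod : lmax * lmin = r₁ * r₂ - n₁ * n₂) (hlt : lmin < lmax)
    (hμ : n₁ + n₂ ≤ μ) (hd : dbar * (n₁ + n₂) = n₁ * (r₁ + n₂) + n₂ * (n₁ + r₂)) :
    -lmin * (n₁ + n₂) * (dbar - lmin) / ((r₁ + n₂) - lmin) ^ 2 <
        (n₁ + n₂) * (-(lmax * lmin)) / ((r₁ + n₂) ^ 2 - lmax * lmin) ∧
      (n₁ + n₂) * (-(lmax * lmin)) / ((r₁ + n₂) ^ 2 - lmax * lmin) <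
        (n₁ + n₂) * (μ - (r₁ + n₂)) / μ := by
  have hn : 0 < n₁ + n₂ := by nlinarith
  have hgap : r₁ * r₂ < n₁ * n₂ := mul_lt_mul'' (by nlinarith) hn₂ (by linarith) hr₂
  refine ⟨beta₁_lt_beta₂ hn (by linarith) (by nlinarith) (by linarith) ?_,
    beta₂_lt_beta₃ (by linarith) hμ (by linarith) (by nlinarith)⟩
  rw [hprod, neg_sub, show dbar - lmax - lmin = dbar - (r₁ + r₂) by linarith]
  exact join_beta₁_lt_beta₂_key hr₁ hr₂ hn₂ (by nlinarith) hd

open SimpleGraph in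
/-- **Example 4.2**. For all `r₁ ≥ 1` and `n₂ ≥ 1` there is an `N` such that for every
`n₁ ≥ N`, every `r₂ ≤ n₂ − 1`, every `r₁`-regular graph `G₁` on `n₁` vertices and every
`r₂`-regular graph `G₂` on `n₂` vertices, the join `G = G₁ ∨ G₂` satisfies `β₁ < β₂ < β₃`,
where `β₁ = −λ_min·n·(d̄ − λ_min)/(δ − λ_min)²` (the bound of Theorem 4.4),
`β₂ = n·(−λ_max·λ_min)/(δ² − λ_max·λ_min)` (Haemers' bound) and `β₃ = n·(μ − δ)/μ`
(the Laplacian Hoffman-type bound). -/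
theorem join_ratio_bounds_comparison :
    ∀ r₁ n₂ : ℕ, 1 ≤ r₁ → 1 ≤ n₂ → ∃ N : ℕ, ∀ n₁ : ℕ, N ≤ n₁ → ∀ r₂ : ℕ, r₂ ≤ n₂ - 1 →
    ∀ (G₁ : SimpleGraph (Fin n₁)) [DecidableRel G₁.Adj]
      (G₂ : SimpleGraph (Fin n₂)) [DecidableRel G₂.Adj],
    G₁.IsRegularOfDegree r₁ → G₂.IsRegularOfDegree r₂ →
    ∀ δ : ℕ, IsLeast (Set.range fun v : Fin n₁ ⊕ Fin n₂ => (G₁.join G₂).degree v) δ →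
    ∀ lmax lmin μ : ℝ,
      IsGreatest (spectrum ℝ ((G₁.join G₂).adjMatrix ℝ)) lmax →
      IsLeast (spectrum ℝ ((G₁.join G₂).adjMatrix ℝ)) lmin →
      IsGreatest (spectrum ℝ ((G₁.join G₂).lapMatrix ℝ)) μ →
      ∀ dbar : ℝ, dbar = (∑ v, ((G₁.join G₂).degree v : ℝ)) / ((n₁ : ℝ) + n₂) →
      -lmin * ((n₁ : ℝ) + n₂) * (dbar - lmin) / ((δ : ℝ) - lmin) ^ 2 <
        ((n₁ : ℝ) + n₂) * (-(lmax * lmin)) / ((δ : ℝ) ^ 2 - lmax * lmin) ∧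
      ((n₁ : ℝ) + n₂) * (-(lmax * lmin)) / ((δ : ℝ) ^ 2 - lmax * lmin) <
        ((n₁ : ℝ) + n₂) * (μ - (δ : ℝ)) / μ := by
  intro r₁ n₂ hr₁ hn₂
  refine ⟨4 * (r₁ + n₂) ^ 2 + 1, fun n₁ hn₁ r₂ hr₂ G₁ _ G₂ _ h₁ h₂ δ hδ lmax lmin μ hmax hmin hμ
    dbar hdbar => ?_⟩
  have : Nonempty (Fin n₁) := ⟨⟨0, by omega⟩⟩
  have : Nonempty (Fin n₂) := ⟨⟨0, by omega⟩⟩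
  have hδ' : δ = r₁ + n₂ := by
    have := hδ.unique (isLeast_degree_join h₁ h₂)
    have hn₁' : r₁ + n₂ ≤ n₁ := by nlinarith
    simpa [Fintype.card_fin, min_eq_left (by omega : r₁ + n₂ ≤ n₁ + r₂)] using this
  have hρ : 4 * max r₁ r₂ ^ 2 < Fintype.card (Fin n₁) * Fintype.card (Fin n₂) := by
    simp only [Fintype.card_fin]
    calc 4 * max r₁ r₂ ^ 2 ≤ 4 * (r₁ + n₂) ^ 2 := by gcongr; omega
      _ < n₁ := by omega
      _ ≤ n₁ * n₂ := Nat.le_mul_of_pos_right _ hn₂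
  obtain ⟨hlmax, hlmin, hlt⟩ := extremal_eigenvalues_adjMatrix_join h₁ h₂ hρ hmax hmin
  simp only [Fintype.card_fin] at hlmax hlmin
  obtain ⟨hsum, hprod⟩ := add_eq_and_mul_eq_of_sub_mul_sub_eq hlmax hlmin hlt.ne'
  have hμ' : (n₁ : ℝ) + n₂ ≤ μ := by simpa using hμ.2 card_add_card_mem_spectrum_lapMatrix_join
  have hd : dbar * (n₁ + n₂) = n₁ * (r₁ + n₂) + n₂ * (n₁ + r₂) := by
    rw [hdbar, div_mul_cancel₀ _ (by positivity), ← Nat.cast_sum, sum_degree_join h₁ h₂]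
    simp
  subst hδ'
  push_cast
  exact ratio_bounds_of_join_spectrum (by exact_mod_cast hr₁) (Nat.cast_nonneg _)
    (by exact_mod_cast (by omega : r₂ < n₂)) (by exact_mod_cast hn₁) hsum hprod hlt hμ' hd
end
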